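/- arXiv:2107.01500 — 4 statements merged into one kernel-verified Lean document; each statement's English description precedes it below -/
import Mathlib

section
/- For every n ≥ 3, every S ∈ F_n, and every S-admissible set B, the common zero set Z(B) ⊆ C^{2n+1} of B is maximal with respect to inclusion in the family {Z(B') : S' ∈ F_n, B' an S'-admissible set} if and only if every maximal run of consecutive elements of A'_n contained in S has cardinality 1 or even cardinality (equivalently, if and only if no maximal run {a, a+2, ..., a+2(m−1)} ⊆ S has odd cardinality m ≥ 3). -/
open MvPolynomial

/-- The variable `x_i` of `ℂ[x₁,…,x_{2n+1}]`, for `1 ≤ i ≤ 2n+1`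
(indices are shifted into `Fin (2n+1)`). -/
noncomputable def xv (n i : ℕ) : MvPolynomial (Fin (2 * n + 1)) ℂ :=
  X ⟨(i - 1) % (2 * n + 1), Nat.mod_lt _ (by omega)⟩

/-- The polynomial `p_a = x_{a-2} x_{a-1} + x_{a+1} x_{a+2}`. -/
noncomputable def pv (n a : ℕ) : MvPolynomial (Fin (2 * n + 1)) ℂ :=
  xv n (a - 2) * xv n (a - 1) + xv n (a + 1) * xv n (a + 2)

/-- `A'_n = {3, 5, 7, …, 2n−1}`, the odd numbers between `3` and `2n−1`. -/
def Aset' (n : ℕ) : Finset ℕ :=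
  (Finset.range (2 * n)).filter (fun a => a % 2 = 1 ∧ 3 ≤ a)

/-- `A_n = A'_n \ {3, 2n−1}`. -/
def Aset (n : ℕ) : Finset ℕ :=
  (Aset' n).filter (fun a => a ≠ 3 ∧ a ≠ 2 * n - 1)

/-- `S` is a Fibonacci subset of `A'_n`: for every `1 ≤ j ≤ n−2`,
`2j+1 ∈ S` or `2j+3 ∈ S`. -/
def IsFib (n : ℕ) (S : Finset ℕ) : Prop :=
  S ⊆ Aset' n ∧ ∀ j, 1 ≤ j → j ≤ n - 2 → (2 * j + 1 ∈ S ∨ 2 * j + 3 ∈ S)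

/-- `U1 = {x_i : i ∈ S}`. -/
noncomputable def U1 (n : ℕ) (S : Finset ℕ) : Finset (MvPolynomial (Fin (2 * n + 1)) ℂ) :=
  S.image (xv n)

/-- The allowable choices of `U2`. -/
def U2ok (n : ℕ) (S : Finset ℕ) (U : Finset (MvPolynomial (Fin (2 * n + 1)) ℂ)) : Prop :=
  (3 ∉ S ∧ 5 ∈ S ∧ U = {xv n 1, xv n 2}) ∨
  (3 ∈ S ∧ 5 ∈ S ∧ (U = {xv n 1} ∨ U = {xv n 2})) ∨
  (3 ∈ S ∧ 5 ∉ S ∧ U = {pv n 3})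

/-- The allowable choices of `U3`. -/
def U3ok (n : ℕ) (S : Finset ℕ) (U : Finset (MvPolynomial (Fin (2 * n + 1)) ℂ)) : Prop :=
  (2 * n - 1 ∉ S ∧ 2 * n - 3 ∈ S ∧ U = {xv n (2 * n), xv n (2 * n + 1)}) ∨
  (2 * n - 3 ∈ S ∧ 2 * n - 1 ∈ S ∧ (U = {xv n (2 * n)} ∨ U = {xv n (2 * n + 1)})) ∨
  (2 * n - 1 ∈ S ∧ 2 * n - 3 ∉ S ∧ U = {pv n (2 * n - 1)})

/-- The contribution `T_a` to `U4` for `a ∈ A_n`. -/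
noncomputable def Tpart (n : ℕ) (S : Finset ℕ) (a : ℕ) :
    Finset (MvPolynomial (Fin (2 * n + 1)) ℂ) :=
  if a - 2 ∈ S then (if a + 2 ∈ S then ∅ else {xv n (a + 1)})
  else (if a + 2 ∈ S then {xv n (a - 1)} else {pv n a})

/-- `U4 = ⋃_{a ∈ A_n} T_a`. -/
noncomputable def U4 (n : ℕ) (S : Finset ℕ) : Finset (MvPolynomial (Fin (2 * n + 1)) ℂ) :=
  (Aset n).biUnion (Tpart n S)

/-- `B` is an `S`-admissible set: `B = U1 ∪ U2 ∪ U3 ∪ U4` for some allowable `U2, U3`. -/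
def IsAdmissible (n : ℕ) (S : Finset ℕ) (B : Finset (MvPolynomial (Fin (2 * n + 1)) ℂ)) :
    Prop :=
  ∃ U2 U3, U2ok n S U2 ∧ U3ok n S U3 ∧ B = U1 n S ∪ U2 ∪ U3 ∪ U4 n S

/-- The common zero set in `ℂ^{2n+1}` of a set of polynomials. -/
def Zset (n : ℕ) (B : Finset (MvPolynomial (Fin (2 * n + 1)) ℂ)) :
    Set (Fin (2 * n + 1) → ℂ) :=
  {z | ∀ q ∈ B, eval z q = 0}

section FibAux

variable {n : ℕ}

lemma mem_Aset'_iff {n a : ℕ} : a ∈ Aset' n ↔ a % 2 = 1 ∧ 3 ≤ a ∧ a < 2*n := by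
  simp only [Aset', Finset.mem_filter, Finset.mem_range]
  tauto

lemma mem_Aset_iff {n a : ℕ} : a ∈ Aset n ↔ a % 2 = 1 ∧ 5 ≤ a ∧ a + 3 ≤ 2*n := by
  simp only [Aset, Finset.mem_filter, mem_Aset'_iff]
  constructor
  · rintro ⟨⟨h1, h2, h3⟩, h4, h5⟩; omega
  · rintro ⟨h1, h2, h3⟩; refine ⟨⟨h1, by omega, by omega⟩, by omega, by omega⟩

/-- test point with a single nonzero coordinate -/
def pt1 (n k : ℕ) : Fin (2*n+1) → ℂ := fun f => if f.1 = (k-1) % (2*n+1) then 1 else 0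

lemma eval_xv (z : Fin (2*n+1) → ℂ) (j : ℕ) :
    eval z (xv n j) = z ⟨(j-1) % (2*n+1), Nat.mod_lt _ (by omega)⟩ := by
  simp [xv]

lemma eval_pv (z : Fin (2*n+1) → ℂ) (a : ℕ) :
    eval z (pv n a) = eval z (xv n (a-2)) * eval z (xv n (a-1))
      + eval z (xv n (a+1)) * eval z (xv n (a+2)) := by
  simp [pv]

lemma eval_pt1_eq {k : ℕ} (hk1 : 1 ≤ k) (hk2 : k ≤ 2*n+1) :
    eval (pt1 n k) (xv n k) = 1 := by
  rw [eval_xv]; simp [pt1]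

lemma eval_pt1_ne {j k : ℕ} (hj1 : 1 ≤ j) (hj2 : j ≤ 2*n+1) (hk1 : 1 ≤ k) (hk2 : k ≤ 2*n+1)
    (hjk : j ≠ k) : eval (pt1 n k) (xv n j) = 0 := by
  rw [eval_xv]
  simp only [pt1]
  have h1 : (j-1) % (2*n+1) = j - 1 := Nat.mod_eq_of_lt (by omega)
  have h2 : (k-1) % (2*n+1) = k - 1 := Nat.mod_eq_of_lt (by omega)
  rw [if_neg (by omega)]

lemma mul_pt1_zero {i j : ℕ} (k : ℕ) (hi1 : 1 ≤ i) (hi2 : i ≤ 2*n+1) (hj1 : 1 ≤ j)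
    (hj2 : j ≤ 2*n+1) (hij : i ≠ j) :
    eval (pt1 n k) (xv n i) * eval (pt1 n k) (xv n j) = 0 := by
  rw [eval_xv, eval_xv]
  simp only [pt1]
  have h1 : (i-1) % (2*n+1) = i - 1 := Nat.mod_eq_of_lt (by omega)
  have h2 : (j-1) % (2*n+1) = j - 1 := Nat.mod_eq_of_lt (by omega)
  by_cases h : (i-1) % (2*n+1) = (k-1) % (2*n+1)
  · have hne : (j-1) % (2*n+1) ≠ (k-1) % (2*n+1) := by omega
    rw [if_neg hne, mul_zero]
  · rw [if_neg h, zero_mul]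

lemma eval_pt1_pv {c : ℕ} (k : ℕ) (hc1 : 3 ≤ c) (hc2 : c + 2 ≤ 2*n+1) :
    eval (pt1 n k) (pv n c) = 0 := by
  rw [eval_pv,
    mul_pt1_zero k (by omega) (by omega) (by omega) (by omega) (by omega),
    mul_pt1_zero k (by omega) (by omega) (by omega) (by omega) (by omega), add_zero]

lemma u2_eval_zero {S : Finset ℕ} {u2 : Finset (MvPolynomial (Fin (2*n+1)) ℂ)}
    (hn : 3 ≤ n) (h : U2ok n S u2) {k : ℕ} (hk1 : 3 ≤ k) (hk2 : k ≤ 2*n+1) :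
    ∀ q ∈ u2, eval (pt1 n k) q = 0 := by
  intro q hq
  rcases h with ⟨_, _, rfl⟩ | ⟨_, _, (rfl | rfl)⟩ | ⟨_, _, rfl⟩ <;>
    simp only [Finset.mem_insert, Finset.mem_singleton] at hq
  · rcases hq with rfl | rfl
    · exact eval_pt1_ne (by omega) (by omega) (by omega) (by omega) (by omega)
    · exact eval_pt1_ne (by omega) (by omega) (by omega) (by omega) (by omega)
  · subst hq; exact eval_pt1_ne (by omega) (by omega) (by omega) (by omega) (by omega)
  · subst hq; exact eval_pt1_ne (by omega) (by omega) (by omega) (by omega) (by omega)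
  · subst hq; exact eval_pt1_pv k (by omega) (by omega)

lemma u3_eval_zero {S : Finset ℕ} {u3 : Finset (MvPolynomial (Fin (2*n+1)) ℂ)}
    (hn : 3 ≤ n) (h : U3ok n S u3) {k : ℕ} (hk1 : 1 ≤ k) (hk2 : k + 2 ≤ 2*n+1) :
    ∀ q ∈ u3, eval (pt1 n k) q = 0 := by
  intro q hq
  rcases h with ⟨_, _, rfl⟩ | ⟨_, _, (rfl | rfl)⟩ | ⟨_, _, rfl⟩ <;>
    simp only [Finset.mem_insert, Finset.mem_singleton] at hq
  · rcases hq with rfl | rfl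
    · exact eval_pt1_ne (by omega) (by omega) (by omega) (by omega) (by omega)
    · exact eval_pt1_ne (by omega) (by omega) (by omega) (by omega) (by omega)
  · subst hq; exact eval_pt1_ne (by omega) (by omega) (by omega) (by omega) (by omega)
  · subst hq; exact eval_pt1_ne (by omega) (by omega) (by omega) (by omega) (by omega)
  · subst hq; exact eval_pt1_pv k (by omega) (by omega)

lemma mem_union4₁ {α : Type*} [DecidableEq α] {A B C D : Finset α} {q : α} (h : q ∈ A) :
    q ∈ A ∪ B ∪ C ∪ D := by simp only [Finset.mem_union]; tauto
lemma mem_union4₂ {α : Type*} [DecidableEq α] {A B C D : Finset α} {q : α} (h : q ∈ B) :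
    q ∈ A ∪ B ∪ C ∪ D := by simp only [Finset.mem_union]; tauto
lemma mem_union4₃ {α : Type*} [DecidableEq α] {A B C D : Finset α} {q : α} (h : q ∈ C) :
    q ∈ A ∪ B ∪ C ∪ D := by simp only [Finset.mem_union]; tauto
lemma mem_union4₄ {α : Type*} [DecidableEq α] {A B C D : Finset α} {q : α} (h : q ∈ D) :
    q ∈ A ∪ B ∪ C ∪ D := by simp only [Finset.mem_union]; tauto

lemma mem_U1 {S : Finset ℕ} {i : ℕ} (hi : i ∈ S) : xv n i ∈ U1 n S :=
  Finset.mem_image_of_mem _ hi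

lemma mem_U4 {S : Finset ℕ} {c : ℕ} {q : MvPolynomial (Fin (2*n+1)) ℂ}
    (hc : c ∈ Aset n) (h : q ∈ Tpart n S c) : q ∈ U4 n S :=
  Finset.mem_biUnion.mpr ⟨c, hc, h⟩

lemma Tpart_eq₁ {S : Finset ℕ} {a : ℕ} (h1 : a-2 ∈ S) (h2 : a+2 ∉ S) :
    Tpart n S a = {xv n (a+1)} := by simp [Tpart, h1, h2]
lemma Tpart_eq₂ {S : Finset ℕ} {a : ℕ} (h1 : a-2 ∉ S) (h2 : a+2 ∈ S) :
    Tpart n S a = {xv n (a-1)} := by simp [Tpart, h1, h2]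
lemma Tpart_eq₃ {S : Finset ℕ} {a : ℕ} (h1 : a-2 ∉ S) (h2 : a+2 ∉ S) :
    Tpart n S a = {pv n a} := by simp [Tpart, h1, h2]

lemma tpart_cases {S : Finset ℕ} {c : ℕ} {q : MvPolynomial (Fin (2*n+1)) ℂ}
    (h : q ∈ Tpart n S c) :
    (c-2 ∈ S ∧ c+2 ∉ S ∧ q = xv n (c+1)) ∨ (c-2 ∉ S ∧ c+2 ∈ S ∧ q = xv n (c-1)) ∨
    (c-2 ∉ S ∧ c+2 ∉ S ∧ q = pv n c) := by
  unfold Tpart at h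
  split_ifs at h with h1 h2 h3 <;> simp only [Finset.notMem_empty, Finset.mem_singleton] at h
  · exact Or.inl ⟨h1, h2, h⟩
  · exact Or.inr (Or.inl ⟨h1, h3, h⟩)
  · exact Or.inr (Or.inr ⟨h1, h3, h⟩)

lemma mem_Zset_iff {B : Finset (MvPolynomial (Fin (2*n+1)) ℂ)} {z : Fin (2*n+1) → ℂ} :
    z ∈ Zset n B ↔ ∀ q ∈ B, eval z q = 0 := Iff.rfl

/-- master lemma: the one-nonzero-coordinate point lies in the zero set -/
lemma master {S : Finset ℕ} (hn : 3 ≤ n) (hSA : S ⊆ Aset' n)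
    (u2 u3 : Finset (MvPolynomial (Fin (2*n+1)) ℂ)) {k : ℕ} (hk1 : 1 ≤ k) (hk2 : k ≤ 2*n+1)
    (hkS : k ∉ S)
    (h2 : ∀ q ∈ u2, eval (pt1 n k) q = 0)
    (h3 : ∀ q ∈ u3, eval (pt1 n k) q = 0)
    (h4a : ∀ c, c % 2 = 1 → 5 ≤ c → c + 3 ≤ 2*n → c-2 ∈ S → c+2 ∉ S → c+1 ≠ k)
    (h4b : ∀ c, c % 2 = 1 → 5 ≤ c → c + 3 ≤ 2*n → c-2 ∉ S → c+2 ∈ S → c-1 ≠ k) :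
    pt1 n k ∈ Zset n (U1 n S ∪ u2 ∪ u3 ∪ U4 n S) := by
  intro q hq
  simp only [Finset.mem_union] at hq
  rcases hq with ((hq | hq) | hq) | hq
  · obtain ⟨i, hi, rfl⟩ := Finset.mem_image.mp hq
    have hb := mem_Aset'_iff.mp (hSA hi)
    exact eval_pt1_ne (by omega) (by omega) hk1 hk2 (fun h => hkS (h ▸ hi))
  · exact h2 q hq
  · exact h3 q hq
  · obtain ⟨c, hc, hq⟩ := Finset.mem_biUnion.mp hq
    have hb := mem_Aset_iff.mp hc
    rcases tpart_cases hq with ⟨ha1, ha2, rfl⟩ | ⟨ha1, ha2, rfl⟩ | ⟨ha1, ha2, rfl⟩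
    · exact eval_pt1_ne (by omega) (by omega) hk1 hk2 (h4a c hb.1 hb.2.1 hb.2.2 ha1 ha2)
    · exact eval_pt1_ne (by omega) (by omega) hk1 hk2 (h4b c hb.1 hb.2.1 hb.2.2 ha1 ha2)
    · exact eval_pt1_pv k (by omega) (by omega)

lemma contra_point {B' : Finset (MvPolynomial (Fin (2*n+1)) ℂ)} {k : ℕ}
    (hk1 : 1 ≤ k) (hk2 : k ≤ 2*n+1) (hmem : xv n k ∈ B') (hz : pt1 n k ∈ Zset n B') :
    False := by
  have := hz _ hmem
  rw [eval_pt1_eq hk1 hk2] at this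
  exact one_ne_zero this

end FibAux

/-- For `n ≥ 3`, `S ∈ F_n` and `B` an `S`-admissible set, the zero set `Z(B)` is
maximal with respect to inclusion in the family of zero sets of admissible sets
if and only if every maximal run of consecutive elements of `A'_n` contained in `S`
has cardinality `1` or even cardinality (equivalently, no maximal run
`{a, a+2, …, a+2(m−1)} ⊆ S` has odd cardinality `m ≥ 3`). -/
theorem maximal_iff_goodRuns (n : ℕ) (hn : 3 ≤ n) (S : Finset ℕ) (hS : IsFib n S)
    (B : Finset (MvPolynomial (Fin (2 * n + 1)) ℂ)) (hB : IsAdmissible n S B) :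
    (∀ (S' : Finset ℕ) (B' : Finset (MvPolynomial (Fin (2 * n + 1)) ℂ)),
        IsFib n S' → IsAdmissible n S' B' → Zset n B ⊆ Zset n B' → Zset n B = Zset n B')
    ↔
    (∀ a m : ℕ, 1 ≤ m → (∀ i < m, a + 2 * i ∈ S) → a - 2 ∉ S → a + 2 * m ∉ S →
        (m = 1 ∨ Even m)) := by
  obtain ⟨u2, u3, h2ok, h3ok, hBdef⟩ := hB
  have hSm : ∀ i ∈ S, i % 2 = 1 ∧ 3 ≤ i ∧ i < 2*n := fun i hi => mem_Aset'_iff.mp (hS.1 hi)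
  constructor
  · -- maximality implies no odd runs of length ≥ 3
    intro hmax a m hm1 hrun hleft hright
    by_contra hbad
    push_neg at hbad
    obtain ⟨hm2, hme⟩ := hbad
    rw [Nat.even_iff] at hme
    have hm3 : 3 ≤ m ∧ m % 2 = 1 := by omega
    have ha0 : a ∈ S := by have := hrun 0 (by omega); simpa using this
    have haP := hSm a ha0
    have htop : a + 2*(m-1) ∈ S := hrun (m-1) (by omega)
    have htopP := hSm _ htop
    set S' : Finset ℕ :=
      S.filter (fun x => ¬(a + 2 ≤ x ∧ x + 4 ≤ a + 2*m ∧ (x - a) % 4 = 2)) with hS'def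
    have hS'mem : ∀ x, x ∈ S' ↔
        x ∈ S ∧ ¬(a + 2 ≤ x ∧ x + 4 ≤ a + 2*m ∧ (x - a) % 4 = 2) := by
      intro x; rw [hS'def]; simp [Finset.mem_filter]
    have hrun_mem : ∀ x, a ≤ x → x + 2 ≤ a + 2*m → (x - a) % 2 = 0 → x ∈ S := by
      intro x h1 h2 h3
      have hx : x = a + 2 * ((x - a)/2) := by omega
      rw [hx]; exact hrun _ (by omega)
    have hS'sub : S' ⊆ S := Finset.filter_subset _ _
    have hS'A : S' ⊆ Aset' n := fun x hx => hS.1 (hS'sub hx)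
    have hfib' : IsFib n S' := by
      refine ⟨hS'A, ?_⟩
      intro j hj1 hj2
      rcases hS.2 j hj1 hj2 with h | h
      · by_cases hrm : a + 2 ≤ 2*j+1 ∧ 2*j+1 + 4 ≤ a + 2*m ∧ (2*j+1 - a) % 4 = 2
        · right
          rw [hS'mem]
          exact ⟨hrun_mem _ (by omega) (by omega) (by omega), by omega⟩
        · left; rw [hS'mem]; exact ⟨h, hrm⟩
      · by_cases hrm : a + 2 ≤ 2*j+3 ∧ 2*j+3 + 4 ≤ a + 2*m ∧ (2*j+3 - a) % 4 = 2
        · left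
          rw [hS'mem]
          exact ⟨hrun_mem _ (by omega) (by omega) (by omega), by omega⟩
        · right; rw [hS'mem]; exact ⟨h, hrm⟩
    have hU2' : ∃ u2', U2ok n S' u2' ∧ ∀ z ∈ Zset n B, ∀ q ∈ u2', eval z q = 0 := by
      by_cases ha3 : a = 3
      · subst ha3
        refine ⟨{pv n 3}, Or.inr (Or.inr ⟨?_, ?_, rfl⟩), ?_⟩
        · rw [hS'mem]; exact ⟨ha0, by omega⟩
        · rw [hS'mem]; rintro ⟨-, hno⟩; exact hno ⟨by omega, by omega, by omega⟩
        · intro z hz q hq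
          simp only [Finset.mem_singleton] at hq; subst hq
          rw [eval_pv]
          have h5 : (5:ℕ) ∈ S := hrun_mem 5 (by omega) (by omega) (by omega)
          have hz5 : eval z (xv n (3+2)) = 0 := hz _ (hBdef ▸ mem_union4₁ (mem_U1 h5))
          rw [hz5, mul_zero, add_zero]
          rcases h2ok with ⟨h3S, -, -⟩ | ⟨-, -, (rfl | rfl)⟩ | ⟨-, h5S, -⟩
          · exact absurd ha0 h3S
          · have hz1 : eval z (xv n 1) = 0 :=
              hz _ (hBdef ▸ mem_union4₂ (Finset.mem_singleton_self _))
            have e : (3:ℕ) - 2 = 1 := by omega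
            rw [e, hz1, zero_mul]
          · have hz2 : eval z (xv n 2) = 0 :=
              hz _ (hBdef ▸ mem_union4₂ (Finset.mem_singleton_self _))
            have e : (3:ℕ) - 1 = 2 := by omega
            rw [e, hz2, mul_zero]
          · exact absurd h5 h5S
      · refine ⟨u2, ?_, fun z hz q hq => hz _ (hBdef ▸ mem_union4₂ hq)⟩
        have h3iff : (3 ∈ S') ↔ 3 ∈ S :=
          ⟨fun h => ((hS'mem 3).mp h).1, fun h => (hS'mem 3).mpr ⟨h, by omega⟩⟩
        have h5iff : (5 ∈ S') ↔ 5 ∈ S :=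
          ⟨fun h => ((hS'mem 5).mp h).1, fun h => (hS'mem 5).mpr ⟨h, by omega⟩⟩
        rcases h2ok with ⟨hA, hB5, hU⟩ | ⟨hA, hB5, hU⟩ | ⟨hA, hB5, hU⟩
        · exact Or.inl ⟨fun h => hA (h3iff.mp h), h5iff.mpr hB5, hU⟩
        · exact Or.inr (Or.inl ⟨h3iff.mpr hA, h5iff.mpr hB5, hU⟩)
        · exact Or.inr (Or.inr ⟨h3iff.mpr hA, fun h => hB5 (h5iff.mp h), hU⟩)
    have hU3' : ∃ u3', U3ok n S' u3' ∧ ∀ z ∈ Zset n B, ∀ q ∈ u3', eval z q = 0 := by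
      by_cases hend : a + 2*m = 2*n + 1
      · have htop' : 2*n-1 ∈ S := by
          have e : a + 2*(m-1) = 2*n-1 := by omega
          rwa [e] at htop
        refine ⟨{pv n (2*n-1)}, Or.inr (Or.inr ⟨?_, ?_, rfl⟩), ?_⟩
        · rw [hS'mem]; exact ⟨htop', by omega⟩
        · rw [hS'mem]; rintro ⟨-, hno⟩; exact hno ⟨by omega, by omega, by omega⟩
        · intro z hz q hq
          simp only [Finset.mem_singleton] at hq; subst hq
          rw [eval_pv]
          have hS3 : 2*n-3 ∈ S := hrun_mem _ (by omega) (by omega) (by omega)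
          have hz3 : eval z (xv n (2*n-1-2)) = 0 := by
            have e : 2*n-1-2 = 2*n-3 := by omega
            rw [e]; exact hz _ (hBdef ▸ mem_union4₁ (mem_U1 hS3))
          rw [hz3, zero_mul, zero_add]
          rcases h3ok with ⟨hA, -, -⟩ | ⟨-, -, (rfl | rfl)⟩ | ⟨-, hA, -⟩
          · exact absurd htop' hA
          · have hzz : eval z (xv n (2*n)) = 0 :=
              hz _ (hBdef ▸ mem_union4₃ (Finset.mem_singleton_self _))
            have e : 2*n-1+1 = 2*n := by omega
            rw [e, hzz, zero_mul]
          · have hzz : eval z (xv n (2*n+1)) = 0 :=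
              hz _ (hBdef ▸ mem_union4₃ (Finset.mem_singleton_self _))
            have e : 2*n-1+2 = 2*n+1 := by omega
            rw [e, hzz, mul_zero]
          · exact absurd hS3 hA
      · refine ⟨u3, ?_, fun z hz q hq => hz _ (hBdef ▸ mem_union4₃ hq)⟩
        have h1iff : (2*n-1 ∈ S') ↔ 2*n-1 ∈ S := by
          refine ⟨fun h => ((hS'mem _).mp h).1, fun h => (hS'mem _).mpr ⟨h, ?_⟩⟩
          rintro ⟨-, hle, -⟩
          omega
        have h3iff : (2*n-3 ∈ S') ↔ 2*n-3 ∈ S := by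
          refine ⟨fun h => ((hS'mem _).mp h).1, fun h => (hS'mem _).mpr ⟨h, ?_⟩⟩
          rintro ⟨-, hle, -⟩
          omega
        rcases h3ok with ⟨hA, hB5, hU⟩ | ⟨hA, hB5, hU⟩ | ⟨hA, hB5, hU⟩
        · exact Or.inl ⟨fun h => hA (h1iff.mp h), h3iff.mpr hB5, hU⟩
        · exact Or.inr (Or.inl ⟨h3iff.mpr hA, h1iff.mpr hB5, hU⟩)
        · exact Or.inr (Or.inr ⟨h1iff.mpr hA, fun h => hB5 (h3iff.mp h), hU⟩)
    obtain ⟨u2', h2'ok, h2'z⟩ := hU2'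
    obtain ⟨u3', h3'ok, h3'z⟩ := hU3'
    have hadm' : IsAdmissible n S' (U1 n S' ∪ u2' ∪ u3' ∪ U4 n S') :=
      ⟨u2', u3', h2'ok, h3'ok, rfl⟩
    have hsub : Zset n B ⊆ Zset n (U1 n S' ∪ u2' ∪ u3' ∪ U4 n S') := by
      intro z hz q hq
      simp only [Finset.mem_union] at hq
      rcases hq with ((hq | hq) | hq) | hq
      · obtain ⟨i, hi, rfl⟩ := Finset.mem_image.mp hq
        exact hz _ (hBdef ▸ mem_union4₁ (mem_U1 (hS'sub hi)))
      · exact h2'z z hz q hq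
      · exact h3'z z hz q hq
      · obtain ⟨c, hc, hq⟩ := Finset.mem_biUnion.mp hq
        have hcb := mem_Aset_iff.mp hc
        rcases tpart_cases hq with ⟨ha1, ha2, rfl⟩ | ⟨ha1, ha2, rfl⟩ | ⟨ha1, ha2, rfl⟩
        · have hc2 : c + 2 ∉ S := by
            intro hmem
            have hrm : a + 2 ≤ c+2 ∧ c+2+4 ≤ a+2*m ∧ (c+2-a)%4 = 2 := by
              by_contra hno; exact ha2 ((hS'mem _).mpr ⟨hmem, hno⟩)
            have hc2m := (hS'mem _).mp ha1
            have hkey : c - 2 = a - 2 := by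
              rcases hc2m with ⟨-, hno⟩
              omega
            exact hleft (hkey ▸ hc2m.1)
          refine hz _ (hBdef ▸ mem_union4₄ (mem_U4 hc ?_))
          rw [Tpart_eq₁ ((hS'mem _).mp ha1).1 hc2]
          exact Finset.mem_singleton_self _
        · have hc2 : c - 2 ∉ S := by
            intro hmem
            have hrm : a + 2 ≤ c-2 ∧ c-2+4 ≤ a+2*m ∧ (c-2-a)%4 = 2 := by
              by_contra hno; exact ha1 ((hS'mem _).mpr ⟨hmem, hno⟩)
            have hc2m := (hS'mem _).mp ha2
            have hkey : c + 2 = a + 2*m := by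
              rcases hc2m with ⟨-, hno⟩
              omega
            exact hright (hkey ▸ hc2m.1)
          refine hz _ (hBdef ▸ mem_union4₄ (mem_U4 hc ?_))
          rw [Tpart_eq₂ hc2 ((hS'mem _).mp ha2).1]
          exact Finset.mem_singleton_self _
        · by_cases hcl : c - 2 ∈ S <;> by_cases hcr : c + 2 ∈ S
          · have hz1 : eval z (xv n (c-2)) = 0 := hz _ (hBdef ▸ mem_union4₁ (mem_U1 hcl))
            have hz2 : eval z (xv n (c+2)) = 0 := hz _ (hBdef ▸ mem_union4₁ (mem_U1 hcr))
            rw [eval_pv, hz1, hz2, zero_mul, mul_zero, add_zero]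
          · have hz1 : eval z (xv n (c-2)) = 0 := hz _ (hBdef ▸ mem_union4₁ (mem_U1 hcl))
            have hz2 : eval z (xv n (c+1)) = 0 := by
              refine hz _ (hBdef ▸ mem_union4₄ (mem_U4 hc ?_))
              rw [Tpart_eq₁ hcl hcr]; exact Finset.mem_singleton_self _
            rw [eval_pv, hz1, hz2, zero_mul, zero_mul, add_zero]
          · have hz1 : eval z (xv n (c-1)) = 0 := by
              refine hz _ (hBdef ▸ mem_union4₄ (mem_U4 hc ?_))
              rw [Tpart_eq₂ hcl hcr]; exact Finset.mem_singleton_self _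
            have hz2 : eval z (xv n (c+2)) = 0 := hz _ (hBdef ▸ mem_union4₁ (mem_U1 hcr))
            rw [eval_pv, hz1, hz2, mul_zero, mul_zero, add_zero]
          · refine hz _ (hBdef ▸ mem_union4₄ (mem_U4 hc ?_))
            rw [Tpart_eq₃ hcl hcr]; exact Finset.mem_singleton_self _
    have hw : pt1 n (a+2) ∈ Zset n (U1 n S' ∪ u2' ∪ u3' ∪ U4 n S') := by
      apply master hn hS'A u2' u3' (by omega) (by omega)
      · rw [hS'mem]; rintro ⟨-, hno⟩; exact hno ⟨by omega, by omega, by omega⟩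
      · exact u2_eval_zero hn h2'ok (by omega) (by omega)
      · exact u3_eval_zero hn h3'ok (by omega) (by omega)
      · intro c hc1 hc2 hc3 _ _; omega
      · intro c hc1 hc2 hc3 _ _; omega
    have heq := hmax S' _ hfib' hadm' hsub
    rw [← heq] at hw
    have ha2S : a + 2 ∈ S := by
      have h := hrun 1 (by omega); have e : a + 2*1 = a + 2 := by ring
      rwa [e] at h
    exact absurd hw (fun hw => contra_point (n := n) (by omega) (by omega)
      (hBdef ▸ mem_union4₁ (mem_U1 ha2S)) hw)
  · intro hgood S' B' hfib' hadm' hsub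
    obtain ⟨u2', u3', h2'ok, h3'ok, hB'def⟩ := hadm'
    have hS'm : ∀ i ∈ S', i % 2 = 1 ∧ 3 ≤ i ∧ i < 2*n := fun i hi => mem_Aset'_iff.mp (hfib'.1 hi)
    -- reusable test points in Zset n B
    have hpt2 : u2 = {xv n 1} → pt1 n 2 ∈ Zset n B := by
      intro hu
      rw [hBdef]
      apply master hn hS.1 u2 u3 (by omega) (by omega)
      · intro h; have := hSm _ h; omega
      · intro q hq; rw [hu] at hq; simp only [Finset.mem_singleton] at hq; subst hq
        exact eval_pt1_ne (by omega) (by omega) (by omega) (by omega) (by omega)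
      · exact u3_eval_zero hn h3ok (by omega) (by omega)
      · intro c h1 h2 h3 _ _; omega
      · intro c h1 h2 h3 _ _; omega
    have hpt1 : u2 = {xv n 2} ∨ u2 = {pv n 3} → pt1 n 1 ∈ Zset n B := by
      intro hu
      rw [hBdef]
      apply master hn hS.1 u2 u3 (by omega) (by omega)
      · intro h; have := hSm _ h; omega
      · rcases hu with hu | hu <;>
          (intro q hq; rw [hu] at hq; simp only [Finset.mem_singleton] at hq; subst hq)
        · exact eval_pt1_ne (by omega) (by omega) (by omega) (by omega) (by omega)
        · exact eval_pt1_pv 1 (by omega) (by omega)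
      · exact u3_eval_zero hn h3ok (by omega) (by omega)
      · intro c h1 h2 h3 _ _; omega
      · intro c h1 h2 h3 _ _; omega
    have hptT : u3 = {xv n (2*n)} ∨ u3 = {pv n (2*n-1)} → pt1 n (2*n+1) ∈ Zset n B := by
      intro hu
      rw [hBdef]
      apply master hn hS.1 u2 u3 (by omega) (by omega)
      · intro h; have := hSm _ h; omega
      · exact u2_eval_zero hn h2ok (by omega) (by omega)
      · rcases hu with hu | hu <;>
          (intro q hq; rw [hu] at hq; simp only [Finset.mem_singleton] at hq; subst hq)
        · exact eval_pt1_ne (by omega) (by omega) (by omega) (by omega) (by omega)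
        · exact eval_pt1_pv (2*n+1) (by omega) (by omega)
      · intro c h1 h2 h3 _ _; omega
      · intro c h1 h2 h3 _ _; omega
    have hptT' : u3 = {xv n (2*n+1)} ∨ u3 = {pv n (2*n-1)} → pt1 n (2*n) ∈ Zset n B := by
      intro hu
      rw [hBdef]
      apply master hn hS.1 u2 u3 (by omega) (by omega)
      · intro h; have := hSm _ h; omega
      · exact u2_eval_zero hn h2ok (by omega) (by omega)
      · rcases hu with hu | hu <;>
          (intro q hq; rw [hu] at hq; simp only [Finset.mem_singleton] at hq; subst hq)
        · exact eval_pt1_ne (by omega) (by omega) (by omega) (by omega) (by omega)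
        · exact eval_pt1_pv (2*n) (by omega) (by omega)
      · intro c h1 h2 h3 _ _; omega
      · intro c h1 h2 h3 _ _; omega
    -- Step 1: S' ⊆ S
    have hS'S : ∀ x ∈ S', x ∈ S := by
      intro x hx
      by_contra hxS
      have hxb := hS'm x hx
      have hp : pt1 n x ∈ Zset n B := by
        rw [hBdef]
        apply master hn hS.1 u2 u3 (by omega) (by omega) hxS
        · exact u2_eval_zero hn h2ok (by omega) (by omega)
        · exact u3_eval_zero hn h3ok (by omega) (by omega)
        · intro c hc1 _ _ _ _; omega
        · intro c hc1 _ _ _ _; omega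
      exact contra_point (by omega) (by omega) (hB'def ▸ mem_union4₁ (mem_U1 hx)) (hsub hp)
    -- Lemma A: leftward propagation
    have lemA : ∀ b, b ∈ S → b ∉ S' → b - 2 ∈ S → b - 4 ∉ S' := by
      intro b hb hb' hb2 hb4
      have hbb := hSm b hb
      have hb2b := hSm _ hb2
      rcases Nat.lt_or_ge b 7 with h7 | h7
      · have := hS'm _ hb4; omega
      · have hc : b - 2 ∈ Aset n := mem_Aset_iff.mpr ⟨by omega, by omega, by omega⟩
        have hmem : xv n (b-1) ∈ B' := by
          rw [hB'def]
          apply mem_union4₄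
          apply mem_U4 hc
          rw [Tpart_eq₁ (show b-2-2 ∈ S' by have e : b-2-2 = b-4 := (by omega); rw [e]; exact hb4)
            (show b-2+2 ∉ S' by have e : b-2+2 = b := (by omega); rw [e]; exact hb')]
          have e : b-2+1 = b-1 := by omega
          rw [e]
          exact Finset.mem_singleton_self _
        have hp : pt1 n (b-1) ∈ Zset n B := by
          rw [hBdef]
          apply master hn hS.1 u2 u3 (by omega) (by omega)
          · intro h; have := hSm _ h; omega
          · exact u2_eval_zero hn h2ok (by omega) (by omega)
          · exact u3_eval_zero hn h3ok (by omega) (by omega)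
          · intro c hc1 hc2 hc3 hcin hcout heq
            exact hcout (show c+2 ∈ S by have e : c+2 = b := (by omega); rw [e]; exact hb)
          · intro c hc1 hc2 hc3 hcout hcin heq
            exact hcout (show c-2 ∈ S by have e : c-2 = b-2 := (by omega); rw [e]; exact hb2)
        exact contra_point (by omega) (by omega) hmem (hsub hp)
    -- Lemma A': rightward propagation
    have lemA' : ∀ b, b ∈ S → b ∉ S' → b + 2 ∈ S → b + 4 ∉ S' := by
      intro b hb hb' hb2 hb4
      have hbb := hSm b hb
      have hb4b := hS'm _ hb4
      have hc : b + 2 ∈ Aset n := mem_Aset_iff.mpr ⟨by omega, by omega, by omega⟩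
      have hmem : xv n (b+1) ∈ B' := by
        rw [hB'def]
        apply mem_union4₄
        apply mem_U4 hc
        rw [Tpart_eq₂ (show b+2-2 ∉ S' by have e : b+2-2 = b := (by omega); rw [e]; exact hb')
          (show b+2+2 ∈ S' by have e : b+2+2 = b+4 := (by omega); rw [e]; exact hb4)]
        have e : b+2-1 = b+1 := by omega
        rw [e]
        exact Finset.mem_singleton_self _
      have hp : pt1 n (b+1) ∈ Zset n B := by
        rw [hBdef]
        apply master hn hS.1 u2 u3 (by omega) (by omega)
        · intro h; have := hSm _ h; omega
        · exact u2_eval_zero hn h2ok (by omega) (by omega)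
        · exact u3_eval_zero hn h3ok (by omega) (by omega)
        · intro c hc1 hc2 hc3 hcin hcout heq
          exact hcout (show c+2 ∈ S by have e : c+2 = b+2 := (by omega); rw [e]; exact hb2)
        · intro c hc1 hc2 hc3 hcout hcin heq
          exact hcout (show c-2 ∈ S by have e : c-2 = b := (by omega); rw [e]; exact hb)
      exact contra_point (by omega) (by omega) hmem (hsub hp)
    -- Lemma B: removed element with a gap on the left
    have lemB : ∀ b, b ∈ S → b ∉ S' → b - 2 ∉ S → False := by
      intro b hb hb' hb2
      have hbb := hSm b hb
      rcases Nat.lt_or_ge b 5 with h5 | h5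
      · have hb3 : b = 3 := by omega
        subst hb3
        rcases h2'ok with ⟨-, -, hu⟩ | ⟨h3', -, -⟩ | ⟨h3', -, -⟩
        · rcases h2ok with ⟨h3S, -, -⟩ | ⟨-, -, (hu2 | hu2)⟩ | ⟨-, -, hu2⟩
          · exact h3S hb
          · refine contra_point (n := n) (k := 2) (by omega) (by omega) ?_ (hsub (hpt2 hu2))
            rw [hB'def]; apply mem_union4₂; rw [hu]
            exact Finset.mem_insert_of_mem (Finset.mem_singleton_self _)
          · refine contra_point (n := n) (k := 1) (by omega) (by omega) ?_
              (hsub (hpt1 (Or.inl hu2)))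
            rw [hB'def]; apply mem_union4₂; rw [hu]
            exact Finset.mem_insert_self _ _
          · refine contra_point (n := n) (k := 1) (by omega) (by omega) ?_
              (hsub (hpt1 (Or.inr hu2)))
            rw [hB'def]; apply mem_union4₂; rw [hu]
            exact Finset.mem_insert_self _ _
        · exact hb' h3'
        · exact hb' h3'
      · rcases hfib'.2 ((b-3)/2) (by omega) (by omega) with h | h
        · exact hb2 (hS'S _ (by have e : 2*((b-3)/2)+1 = b-2 := (by omega); rwa [e] at h))
        · exact hb' (by have e : 2*((b-3)/2)+3 = b := (by omega); rwa [e] at h)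
    -- Lemma B': removed element with a gap on the right
    have lemB' : ∀ b, b ∈ S → b ∉ S' → b + 2 ∉ S → False := by
      intro b hb hb' hb2
      have hbb := hSm b hb
      rcases Nat.lt_or_ge b (2*n-1) with hlt | hge
      · rcases hfib'.2 ((b-1)/2) (by omega) (by omega) with h | h
        · exact hb' (by have e : 2*((b-1)/2)+1 = b := (by omega); rwa [e] at h)
        · exact hb2 (hS'S _ (by have e : 2*((b-1)/2)+3 = b+2 := (by omega); rwa [e] at h))
      · have hb21 : b = 2*n-1 := by omega
        subst hb21
        rcases h3'ok with ⟨-, -, hu⟩ | ⟨-, h3', -⟩ | ⟨h3', -, -⟩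
        · rcases h3ok with ⟨hA, -, -⟩ | ⟨-, -, (hu3 | hu3)⟩ | ⟨-, -, hu3⟩
          · exact hA hb
          · refine contra_point (n := n) (k := 2*n+1) (by omega) (by omega) ?_
              (hsub (hptT (Or.inl hu3)))
            rw [hB'def]; apply mem_union4₃; rw [hu]
            exact Finset.mem_insert_of_mem (Finset.mem_singleton_self _)
          · refine contra_point (n := n) (k := 2*n) (by omega) (by omega) ?_
              (hsub (hptT' (Or.inl hu3)))
            rw [hB'def]; apply mem_union4₃; rw [hu]
            exact Finset.mem_insert_self _ _
          · refine contra_point (n := n) (k := 2*n) (by omega) (by omega) ?_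
              (hsub (hptT' (Or.inr hu3)))
            rw [hB'def]; apply mem_union4₃; rw [hu]
            exact Finset.mem_insert_self _ _
        · exact hb' h3'
        · exact hb' h3'
    -- ascend: walk right through an odd run
    have ascend : ∀ fuel t l, n ≤ fuel + t → l % 2 = 1 → 3 ≤ l → l - 2 ∉ S →
        (∀ k, k ≤ 2*t+1 → l + 2*k ∈ S) → l + 2 + 4*t ∉ S' → False := by
      intro fuel
      induction fuel with
      | zero =>
        intro t l hnt _ _ _ hall _
        have := hSm _ (hall (2*t+1) le_rfl)
        omega
      | succ fuel ih =>
        intro t l hnt hlo hl3 hl2 hall hc'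
        have hcS : l + 2 + 4*t ∈ S := by
          have h := hall (2*t+1) le_rfl
          have e : l + 2*(2*t+1) = l + 2 + 4*t := by ring
          rwa [e] at h
        by_cases hnext : l + 2 + 4*t + 2 ∈ S
        · have hc4 : l + 2 + 4*t + 4 ∉ S' := lemA' (l+2+4*t) hcS hc' hnext
          by_cases hin : l + 2 + 4*t + 4 ∈ S
          · refine ih (t+1) l (by omega) hlo hl3 hl2 ?_ ?_
            · intro k hk
              rcases Nat.lt_or_ge k (2*t+2) with h | h
              · exact hall k (by omega)
              · rcases Nat.eq_or_lt_of_le h with h2 | h2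
                · have e : l + 2*k = l+2+4*t+2 := by omega
                  rw [e]; exact hnext
                · have e : l + 2*k = l+2+4*t+4 := by omega
                  rw [e]; exact hin
            · have e : l + 2 + 4*(t+1) = l+2+4*t+4 := by ring
              rw [e]; exact hc4
          · have hres := hgood l (2*t+3) (by omega) ?_ hl2 ?_
            · rcases hres with h | h
              · omega
              · rw [Nat.even_iff] at h; omega
            · intro i hi
              rcases Nat.lt_or_ge i (2*t+2) with h | h
              · exact hall i (by omega)
              · have e : l + 2*i = l+2+4*t+2 := by omega
                rw [e]; exact hnext
            · have e : l + 2*(2*t+3) = l+2+4*t+4 := by ring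
              rw [e]; exact hin
        · exact lemB' _ hcS hc' hnext
    -- descend: walk left from any removed element
    have descend : ∀ N b, b ≤ N → b ∈ S → b ∉ S' → False := by
      intro N
      induction N with
      | zero => intro b hb hbS _; have := hSm _ hbS; omega
      | succ N ih =>
        intro b hbN hb hb'
        have hbb := hSm b hb
        by_cases hb2 : b - 2 ∈ S
        · have hb2b := hSm _ hb2
          have hb4' : b - 4 ∉ S' := lemA b hb hb' hb2
          by_cases hb4 : b - 4 ∈ S
          · exact ih (b-4) (by omega) hb4 hb4'
          · refine ascend n 0 (b-2) (by omega) (by omega) (by omega) ?_ ?_ ?_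
            · have e : b - 2 - 2 = b - 4 := by omega
              rw [e]; exact hb4
            · intro k hk
              rcases Nat.le_one_iff_eq_zero_or_eq_one.mp (by omega : k ≤ 1) with rfl | rfl
              · have e : b - 2 + 2*0 = b-2 := by omega
                rw [e]; exact hb2
              · have e : b - 2 + 2*1 = b := by omega
                rw [e]; exact hb
            · have e : b - 2 + 2 + 4*0 = b := by omega
              rw [e]; exact hb'
        · exact lemB b hb hb' hb2
    have hSeq : S' = S := by
      apply Finset.Subset.antisymm (fun x hx => hS'S x hx)
      intro x hx
      by_contra h
      exact descend x x le_rfl hx h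
    subst hSeq
    -- matching boundary choices
    have hu2eq : u2' = u2 := by
      rcases h2ok with ⟨h3S, h5S, hu⟩ | ⟨h3S, h5S, hu⟩ | ⟨h3S, h5S, hu⟩ <;>
        rcases h2'ok with ⟨h3S', h5S', hu'⟩ | ⟨h3S', h5S', hu'⟩ | ⟨h3S', h5S', hu'⟩ <;>
        first
          | exact absurd h3S h3S'
          | exact absurd h3S' h3S
          | exact absurd h5S h5S'
          | exact absurd h5S' h5S
          | exact absurd h5S' h3S
          | exact absurd h5S h3S'
          | exact absurd h3S h5S'
          | exact absurd h3S' h5S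
          | skip
      · rw [hu, hu']
      · rcases hu with rfl | rfl <;> rcases hu' with rfl | rfl
        · rfl
        · exfalso
          refine contra_point (n := n) (k := 2) (by omega) (by omega) ?_ (hsub (hpt2 rfl))
          rw [hB'def]; exact mem_union4₂ (Finset.mem_singleton_self _)
        · exfalso
          refine contra_point (n := n) (k := 1) (by omega) (by omega) ?_
            (hsub (hpt1 (Or.inl rfl)))
          rw [hB'def]; exact mem_union4₂ (Finset.mem_singleton_self _)
        · rfl
      · rw [hu, hu']
    have hu3eq : u3' = u3 := by
      rcases h3ok with ⟨h3S, h5S, hu⟩ | ⟨h3S, h5S, hu⟩ | ⟨h3S, h5S, hu⟩ <;>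
        rcases h3'ok with ⟨h3S', h5S', hu'⟩ | ⟨h3S', h5S', hu'⟩ | ⟨h3S', h5S', hu'⟩ <;>
        first
          | exact absurd h3S h3S'
          | exact absurd h3S' h3S
          | exact absurd h5S h5S'
          | exact absurd h5S' h5S
          | exact absurd h5S' h3S
          | exact absurd h5S h3S'
          | exact absurd h3S h5S'
          | exact absurd h3S' h5S
          | skip
      · rw [hu, hu']
      · rcases hu with rfl | rfl <;> rcases hu' with rfl | rfl
        · rfl
        · exfalso
          refine contra_point (n := n) (k := 2*n+1) (by omega) (by omega) ?_
            (hsub (hptT (Or.inl rfl)))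
          rw [hB'def]; exact mem_union4₃ (Finset.mem_singleton_self _)
        · exfalso
          refine contra_point (n := n) (k := 2*n) (by omega) (by omega) ?_
            (hsub (hptT' (Or.inl rfl)))
          rw [hB'def]; exact mem_union4₃ (Finset.mem_singleton_self _)
        · rfl
      · rw [hu, hu']
    rw [hBdef, hB'def, hu2eq, hu3eq]
end

section
/- Let k ≥ 2 be an integer and let s ≥ 1. Then q_s is a well-defined nonzero rational function in C(λ); if s is odd then the order of vanishing of q_s at λ = 0 equals k (its numerator in lowest terms has 0 as a root of multiplicity exactly k and its denominator does not vanish at 0), and if s is even then the order of vanishing of q_s at λ = 0 equals 0 (neither its numerator nor its denominator in lowest terms vanishes at 0). -/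
/-- The sequence `q_0 = 1`, `q_{s+1} = λ^k/(λ^k − q_s)` in the field `ℂ(λ)` of rational
functions (so `q_s = f^s(1)` for `f(x) = λ^k/(λ^k − x)`). -/
noncomputable def qseq (k : ℕ) : ℕ → RatFunc ℂ
  | 0 => 1
  | s + 1 => (RatFunc.X : RatFunc ℂ) ^ k / ((RatFunc.X : RatFunc ℂ) ^ k - qseq k s)

open Polynomial

/-- If `q = p / r` with `p, r` coprime and nonzero, then the numerator and denominator of `q`
are `c • p` and `c • r` for some nonzero constant `c`. -/
lemma num_denom_of_isCoprime {K : Type*} [Field K] {p r : K[X]} (hp : p ≠ 0) (hr : r ≠ 0)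
    (h : IsCoprime p r) :
    ∃ c : K, c ≠ 0 ∧
      (algebraMap K[X] (RatFunc K) p / algebraMap K[X] (RatFunc K) r).num = Polynomial.C c * p ∧
      (algebraMap K[X] (RatFunc K) p / algebraMap K[X] (RatFunc K) r).denom
        = Polynomial.C c * r := by
  set q := algebraMap K[X] (RatFunc K) p / algebraMap K[X] (RatFunc K) r with hq
  have hcross : q.num * r = p * q.denom := (RatFunc.num_mul_eq_mul_denom_iff hr).mpr rfl
  have hcop : IsCoprime q.num q.denom := RatFunc.isCoprime_num_denom q
  have hqne : q ≠ 0 := div_ne_zero (RatFunc.algebraMap_ne_zero hp) (RatFunc.algebraMap_ne_zero hr)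
  have hnum_ne : q.num ≠ 0 := RatFunc.num_ne_zero hqne
  -- q.num divides p
  have h1 : q.num ∣ p := by
    have : q.num ∣ p * q.denom := ⟨r, hcross.symm⟩
    exact hcop.dvd_of_dvd_mul_right this
  -- p divides q.num
  have h2 : p ∣ q.num := by
    have : p ∣ q.num * r := ⟨q.denom, hcross⟩
    exact h.dvd_of_dvd_mul_right this
  obtain ⟨u, huEq⟩ := (associated_of_dvd_dvd h2 h1)
  obtain ⟨c, hcu, hc⟩ := Polynomial.isUnit_iff.mp u.isUnit
  refine ⟨c, hcu.ne_zero, ?_, ?_⟩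
  · rw [← huEq, ← hc]; ring
  · -- from hcross : (C c * p) * r = p * q.denom
    have hnum : q.num = Polynomial.C c * p := by rw [← huEq, ← hc]; ring
    have : p * (Polynomial.C c * r) = p * q.denom := by
      rw [← hcross, hnum]; ring
    exact (mul_left_cancel₀ hp this).symm

lemma isCoprime_X_of_eval_ne {K : Type*} [Field K] {n : K[X]}
    (h : Polynomial.eval 0 n ≠ 0) : IsCoprime (Polynomial.X : K[X]) n := by
  rcases EuclideanDomain.dvd_or_coprime (Polynomial.X : K[X]) n Polynomial.irreducible_X with
    hd | hc
  · exact absurd (Polynomial.coeff_zero_eq_eval_zero n ▸ Polynomial.X_dvd_iff.mp hd) h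
  · exact hc

/-- Strengthened induction: track the exact value of the reduced numerator/denominator at 0. -/
lemma qseq_key (k : ℕ) (hk : 2 ≤ k) (s : ℕ) :
    qseq k s ≠ 0 ∧
    (∀ m, s = 2 * m →
      Polynomial.eval 0 (qseq k s).num ≠ 0 ∧
      Polynomial.eval 0 (qseq k s).denom
        = ((m : ℂ) + 1) * Polynomial.eval 0 (qseq k s).num) ∧
    (∀ m, s = 2 * m + 1 →
      ∃ u : ℂ[X], (qseq k s).num = Polynomial.X ^ k * u ∧
        Polynomial.eval 0 u = -((m : ℂ) + 1) * Polynomial.eval 0 (qseq k s).denom ∧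
        Polynomial.eval 0 (qseq k s).denom ≠ 0) := by
  induction s with
  | zero =>
    refine ⟨one_ne_zero, ?_, ?_⟩
    · intro m hm
      have hm0 : m = 0 := by omega
      subst hm0
      simp [qseq, RatFunc.num_one, RatFunc.denom_one]
    · intro m hm; omega
  | succ s ih =>
    obtain ⟨hne, heven, hodd⟩ := ih
    set n := (qseq k s).num with hn
    set d := (qseq k s).denom with hd
    have hd0 : d ≠ 0 := RatFunc.denom_ne_zero _
    have hn0 : n ≠ 0 := RatFunc.num_ne_zero hne
    have hcop : IsCoprime n d := RatFunc.isCoprime_num_denom _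
    have hXk : ((RatFunc.X : RatFunc ℂ) ^ k)
        = algebraMap ℂ[X] (RatFunc ℂ) (Polynomial.X ^ k) := by
      rw [map_pow, RatFunc.algebraMap_X]
    have hqs : (qseq k s) = algebraMap ℂ[X] (RatFunc ℂ) n / algebraMap ℂ[X] (RatFunc ℂ) d :=
      (RatFunc.num_div_denom _).symm
    have hsub : (RatFunc.X : RatFunc ℂ) ^ k - qseq k s
        = algebraMap ℂ[X] (RatFunc ℂ) (Polynomial.X ^ k * d - n)
          / algebraMap ℂ[X] (RatFunc ℂ) d := by
      rw [hqs, hXk, map_sub, map_mul, sub_div, mul_div_assoc,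
        div_self (RatFunc.algebraMap_ne_zero hd0), mul_one]
    have hform : qseq k (s + 1)
        = algebraMap ℂ[X] (RatFunc ℂ) (Polynomial.X ^ k * d)
          / algebraMap ℂ[X] (RatFunc ℂ) (Polynomial.X ^ k * d - n) := by
      show (RatFunc.X : RatFunc ℂ) ^ k / ((RatFunc.X : RatFunc ℂ) ^ k - qseq k s) = _
      rw [hsub, hXk, div_div_eq_mul_div, map_mul]
    rcases Nat.even_or_odd s with ⟨m, hm⟩ | ⟨m, hm⟩
    · -- s = 2m even, s+1 odd
      have hm' : s = 2 * m := by omega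
      obtain ⟨hnum0, hdeq⟩ := heven m hm'
      -- the fraction X^k d / (X^k d - n) is in lowest terms
      have hXn : IsCoprime (Polynomial.X ^ k * d : ℂ[X]) n :=
        ((isCoprime_X_of_eval_ne hnum0).pow_left).mul_left hcop.symm
      have hrne : Polynomial.eval 0 (Polynomial.X ^ k * d - n) ≠ 0 := by
        have h2k : (2:ℕ) ≤ k := hk
        simp only [Polynomial.eval_sub, Polynomial.eval_mul, Polynomial.eval_pow,
          Polynomial.eval_X]
        rw [zero_pow (by omega : k ≠ 0)]
        simpa using hnum0
      have hr0 : (Polynomial.X ^ k * d - n : ℂ[X]) ≠ 0 := fun h => hrne (by rw [h]; simp)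
      have hp0 : (Polynomial.X ^ k * d : ℂ[X]) ≠ 0 :=
        mul_ne_zero (pow_ne_zero _ Polynomial.X_ne_zero) hd0
      have hcop' : IsCoprime (Polynomial.X ^ k * d : ℂ[X]) (Polynomial.X ^ k * d - n) := by
        have : IsCoprime (Polynomial.X ^ k * d : ℂ[X]) (-n) := hXn.neg_right
        simpa [neg_add_eq_sub] using this.add_mul_left_right 1
      obtain ⟨c, hc0, hcnum, hcdenom⟩ := num_denom_of_isCoprime hp0 hr0 hcop'
      rw [← hform] at hcnum hcdenom
      have hq1ne : qseq k (s + 1) ≠ 0 := by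
        rw [hform]
        exact div_ne_zero (RatFunc.algebraMap_ne_zero hp0) (RatFunc.algebraMap_ne_zero hr0)
      refine ⟨hq1ne, ?_, ?_⟩
      · intro m' hm'2; omega
      · intro m' hm'2
        have hmm : m' = m := by omega
        subst hmm
        refine ⟨Polynomial.C c * d, by rw [hcnum]; ring, ?_, ?_⟩
        · rw [hcdenom]
          simp only [Polynomial.eval_mul, Polynomial.eval_C, Polynomial.eval_sub,
            Polynomial.eval_pow, Polynomial.eval_X]
          rw [zero_pow (by omega : k ≠ 0), hdeq]
          ring
        · rw [hcdenom]
          simp only [Polynomial.eval_mul, Polynomial.eval_C]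
          exact mul_ne_zero hc0 hrne
    · -- s = 2m+1 odd, s+1 even
      have hm' : s = 2 * m + 1 := by omega
      obtain ⟨u, hnu, hueval, hdne⟩ := hodd m hm'
      -- q_{s+1} = d / (d - u)
      have hXne : (algebraMap ℂ[X] (RatFunc ℂ) (Polynomial.X ^ k)) ≠ 0 :=
        RatFunc.algebraMap_ne_zero (pow_ne_zero _ Polynomial.X_ne_zero)
      have hform2 : qseq k (s + 1)
          = algebraMap ℂ[X] (RatFunc ℂ) d / algebraMap ℂ[X] (RatFunc ℂ) (d - u) := by
        rw [hform, hnu]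
        have : (Polynomial.X ^ k * d - Polynomial.X ^ k * u : ℂ[X])
            = Polynomial.X ^ k * (d - u) := by ring
        rw [this, map_mul, map_mul, mul_div_mul_left _ _ hXne]
      have hueval' : Polynomial.eval 0 u = -((m : ℂ) + 1) * Polynomial.eval 0 d := hueval
      have hdu : Polynomial.eval 0 (d - u) ≠ 0 := by
        rw [Polynomial.eval_sub, hueval']
        have : Polynomial.eval 0 d - -((m : ℂ) + 1) * Polynomial.eval 0 d
            = ((m : ℂ) + 2) * Polynomial.eval 0 d := by ring
        rw [this]
        refine mul_ne_zero ?_ hdne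
        have : ((m : ℂ) + 2) ≠ 0 := by
          have h2 : ((m : ℂ) + 2) = ((m + 2 : ℕ) : ℂ) := by push_cast; ring
          rw [h2]
          exact Nat.cast_ne_zero.mpr (by omega)
        exact this
      have hdu0 : (d - u : ℂ[X]) ≠ 0 := fun h => hdu (by rw [h]; simp)
      have hcopdu : IsCoprime d (d - u) := by
        have hcdu : IsCoprime d u := by
          have : IsCoprime (Polynomial.X ^ k * u) d := by rw [← hnu]; exact hcop
          exact (this.of_mul_left_right).symm
        have : IsCoprime d (-u) := hcdu.neg_right
        simpa [neg_add_eq_sub] using this.add_mul_left_right 1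
      obtain ⟨c, hc0, hcnum, hcdenom⟩ := num_denom_of_isCoprime hd0 hdu0 hcopdu
      rw [← hform2] at hcnum hcdenom
      have hq1ne : qseq k (s + 1) ≠ 0 := by
        rw [hform2]
        exact div_ne_zero (RatFunc.algebraMap_ne_zero hd0) (RatFunc.algebraMap_ne_zero hdu0)
      refine ⟨hq1ne, ?_, ?_⟩
      · intro m' hm'2
        have hmm : m' = m + 1 := by omega
        subst hmm
        constructor
        · rw [hcnum]
          simp only [Polynomial.eval_mul, Polynomial.eval_C]
          exact mul_ne_zero hc0 hdne
        · rw [hcnum, hcdenom]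
          simp only [Polynomial.eval_mul, Polynomial.eval_C, Polynomial.eval_sub]
          rw [hueval']
          push_cast
          ring
      · intro m' hm'2; omega

/-- For `k ≥ 2` and `s ≥ 1`, `q_s` is a well-defined nonzero rational function; if `s`
is odd its order of vanishing at `λ = 0` is `k` (its numerator in lowest terms has `0`
as a root of multiplicity exactly `k` and its denominator does not vanish at `0`), and
if `s` is even its order of vanishing at `λ = 0` is `0` (neither the numerator nor the
denominator in lowest terms vanishes at `0`). -/
theorem qseq_order_of_vanishing (k : ℕ) (hk : 2 ≤ k) (s : ℕ) (hs : 1 ≤ s) :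
    qseq k s ≠ 0 ∧
    (Odd s → (qseq k s).num.rootMultiplicity 0 = k ∧
      Polynomial.eval 0 (qseq k s).denom ≠ 0) ∧
    (Even s → Polynomial.eval 0 (qseq k s).num ≠ 0 ∧
      Polynomial.eval 0 (qseq k s).denom ≠ 0) := by
  obtain ⟨hne, heven, hodd⟩ := qseq_key k hk s
  refine ⟨hne, ?_, ?_⟩
  · rintro ⟨m, hm⟩
    obtain ⟨u, hnu, hueval, hdne⟩ := hodd m (by omega)
    refine ⟨?_, hdne⟩
    have hu0 : Polynomial.eval 0 u ≠ 0 := by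
      rw [hueval]
      refine mul_ne_zero ?_ hdne
      intro h
      have h' : ((m : ℂ) + 1) = 0 := neg_eq_zero.mp h
      have h2 : ((m + 1 : ℕ) : ℂ) = 0 := by push_cast; linear_combination h'
      exact Nat.succ_ne_zero m (by exact_mod_cast h2)
    have hune : u ≠ 0 := fun h => hu0 (by rw [h]; simp)
    rw [hnu]
    have : (Polynomial.X ^ k : ℂ[X]) = (Polynomial.X - Polynomial.C 0) ^ k := by simp
    rw [this, mul_comm, Polynomial.rootMultiplicity_mul_X_sub_C_pow hune,
      Polynomial.rootMultiplicity_eq_zero (by simpa [Polynomial.IsRoot] using hu0), zero_add]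
  · rintro ⟨m, hm⟩
    obtain ⟨hnum0, hdeq⟩ := heven m (by omega)
    refine ⟨hnum0, ?_⟩
    rw [hdeq]
    refine mul_ne_zero ?_ hnum0
    intro h
    have h2 : ((m + 1 : ℕ) : ℂ) = 0 := by push_cast; linear_combination h
    exact Nat.succ_ne_zero m (by exact_mod_cast h2)
end

section
/- Let k ≥ 2 be an integer and let s ≥ 1. Then the order of vanishing at λ = 0 of the rational function λ^k − q_s equals the order of vanishing at λ = 0 of q_s; both are equal to k when s is odd and equal to 0 when s is even. -/
/-- The order of vanishing of a rational function at `λ = 0`: the multiplicity of the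
root `0` in the numerator minus the multiplicity of the root `0` in the denominator,
written in lowest terms. -/
noncomputable def ordZero (r : RatFunc ℂ) : ℤ :=
  (r.num.rootMultiplicity 0 : ℤ) - (r.denom.rootMultiplicity 0 : ℤ)

open Polynomial

local notation "φ" => algebraMap (Polynomial ℂ) (RatFunc ℂ)

lemma rm0_X_pow (k : ℕ) : (X ^ k : ℂ[X]).rootMultiplicity 0 = k := by
  simpa using rootMultiplicity_X_sub_C_pow (0 : ℂ) k

/-- `ordZero` of `p / q` is the difference of the `X`-adic multiplicities. -/
lemma ordZero_div (p q : ℂ[X]) (hp : p ≠ 0) (hq : q ≠ 0) :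
    ordZero (φ p / φ q) = (p.rootMultiplicity 0 : ℤ) - q.rootMultiplicity 0 := by
  set r := φ p / φ q with hr
  have hr0 : r ≠ 0 := div_ne_zero (RatFunc.algebraMap_ne_zero hp) (RatFunc.algebraMap_ne_zero hq)
  have key : r.num * q = r.denom * p := by
    apply RatFunc.algebraMap_injective ℂ
    have h1 := RatFunc.num_div_denom r
    rw [hr, div_eq_div_iff (RatFunc.algebraMap_ne_zero (RatFunc.denom_ne_zero r))
      (RatFunc.algebraMap_ne_zero hq)] at h1
    push_cast [map_mul]
    linear_combination h1
  have h2 := rootMultiplicity_mul (x := (0:ℂ)) (p := r.num) (q := q)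
    (mul_ne_zero (RatFunc.num_ne_zero hr0) hq)
  have h3 := rootMultiplicity_mul (x := (0:ℂ)) (p := r.denom) (q := p)
    (mul_ne_zero (RatFunc.denom_ne_zero r) hp)
  rw [key] at h2
  unfold ordZero
  omega

/-- The main induction: `q_{2m} = a/b` with `a(0) = 1` and `b(0) = m + 1`. -/
lemma qseq_inv (k : ℕ) (hk : 2 ≤ k) :
    ∀ m : ℕ, ∃ a b : ℂ[X], qseq k (2 * m) = φ a / φ b ∧
      a.eval 0 = 1 ∧ b.eval 0 = (m : ℂ) + 1 := by
  have hX0 : (X ^ k : ℂ[X]).eval 0 = 0 := by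
    simp [zero_pow (by omega : k ≠ 0)]
  have hXk : (RatFunc.X : RatFunc ℂ) ^ k = φ (X ^ k) := by
    rw [map_pow, RatFunc.algebraMap_X]
  intro m
  induction m with
  | zero => exact ⟨1, 1, by simp [qseq], by simp, by simp⟩
  | succ m ih =>
    obtain ⟨a, b, hab, ha, hb⟩ := ih
    have hm1 : (m : ℂ) + 1 ≠ 0 := by exact_mod_cast (by omega : m + 1 ≠ 0)
    have hm2 : (m : ℂ) + 2 ≠ 0 := by exact_mod_cast (by omega : m + 2 ≠ 0)
    have hbne : b ≠ 0 := fun h => hm1 (by rw [h] at hb; simpa using hb.symm)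
    set D : ℂ[X] := X ^ k * b - a with hD
    have hDeval : D.eval 0 = -1 := by simp [hD, ha, hX0]
    have hDne : D ≠ 0 := fun h => by rw [h] at hDeval; simp at hDeval
    set E : ℂ[X] := X ^ k * b - a - b with hE
    have hEeval : E.eval 0 = -((m : ℂ) + 2) := by simp [hE, ha, hb, hX0]; ring
    have hEne : E ≠ 0 := fun h => by
      rw [h] at hEeval; simp at hEeval; exact hm2 (by linear_combination hEeval)
    have hb' : φ b ≠ 0 := RatFunc.algebraMap_ne_zero hbne
    have hD' : φ D ≠ 0 := RatFunc.algebraMap_ne_zero hDne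
    have hE' : φ E ≠ 0 := RatFunc.algebraMap_ne_zero hEne
    have hsub1 : (RatFunc.X : RatFunc ℂ) ^ k - φ a / φ b = φ D / φ b := by
      rw [eq_div_iff hb', sub_mul, div_mul_cancel₀ _ hb', hXk, ← map_mul, ← map_sub]
    have step1 : qseq k (2 * m + 1) = φ (X ^ k * b) / φ D := by
      show (RatFunc.X : RatFunc ℂ) ^ k / ((RatFunc.X : RatFunc ℂ) ^ k - qseq k (2*m)) = _
      rw [hab, hsub1, div_div_eq_mul_div, hXk, ← map_mul]
    have hsub2 : (RatFunc.X : RatFunc ℂ) ^ k - φ (X ^ k * b) / φ D = φ (X ^ k * E) / φ D := by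
      rw [eq_div_iff hD', sub_mul, div_mul_cancel₀ _ hD', hXk, ← map_mul, ← map_sub]
      congr 1
      rw [hD, hE]; ring
    have step2 : qseq k (2 * (m + 1)) = φ D / φ E := by
      show (RatFunc.X : RatFunc ℂ) ^ k / ((RatFunc.X : RatFunc ℂ) ^ k - qseq k (2*m+1)) = _
      rw [step1, hsub2, div_div_eq_mul_div, hXk, ← map_mul]
      rw [div_eq_div_iff (RatFunc.algebraMap_ne_zero (mul_ne_zero
        (pow_ne_zero k X_ne_zero) hEne)) hE', ← map_mul, ← map_mul]
      congr 1
      ring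
    refine ⟨a - X ^ k * b, a + b - X ^ k * b, ?_, by simp [ha, hX0], by
      simp [ha, hb, hX0]; ring⟩
    rw [step2, div_eq_div_iff hE' (RatFunc.algebraMap_ne_zero (fun h => hEne (by
      have : E = -(a + b - X ^ k * b) := by rw [hE]; ring
      rw [this, h, neg_zero]))), ← map_mul, ← map_mul]
    congr 1
    rw [hD, hE]; ring

/-- For `k ≥ 2` and `s ≥ 1`, the order of vanishing at `λ = 0` of `λ^k − q_s` equals
that of `q_s`; both equal `k` when `s` is odd and `0` when `s` is even. -/
theorem ordZero_pow_sub_qseq (k : ℕ) (hk : 2 ≤ k) (s : ℕ) (hs : 1 ≤ s) :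
    ordZero ((RatFunc.X : RatFunc ℂ) ^ k - qseq k s) = ordZero (qseq k s) ∧
    (Odd s → ordZero (qseq k s) = k) ∧
    (Even s → ordZero (qseq k s) = 0) := by
  have hX0 : (X ^ k : ℂ[X]).eval 0 = 0 := by
    simp [zero_pow (by omega : k ≠ 0)]
  have hXk : (RatFunc.X : RatFunc ℂ) ^ k = φ (X ^ k) := by
    rw [map_pow, RatFunc.algebraMap_X]
  rcases Nat.even_or_odd s with he | ho
  · -- even case : s = 2 * m
    obtain ⟨m, hm⟩ := he
    have hs2 : s = 2 * m := by omega
    subst hs2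
    obtain ⟨a, b, hab, ha, hb⟩ := qseq_inv k hk m
    have hm1 : (m : ℂ) + 1 ≠ 0 := by exact_mod_cast (by omega : m + 1 ≠ 0)
    have hane : a ≠ 0 := fun h => by rw [h] at ha; simp at ha
    have hbne : b ≠ 0 := fun h => hm1 (by rw [h] at hb; simpa using hb.symm)
    have hrma : a.rootMultiplicity 0 = 0 := rootMultiplicity_eq_zero (by simp [IsRoot, ha])
    have hrmb : b.rootMultiplicity 0 = 0 := rootMultiplicity_eq_zero (by simp [IsRoot, hb, hm1])
    have hb' : φ b ≠ 0 := RatFunc.algebraMap_ne_zero hbne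
    set D : ℂ[X] := X ^ k * b - a with hD
    have hDeval : D.eval 0 = -1 := by simp [hD, ha, hX0]
    have hDne : D ≠ 0 := fun h => by rw [h] at hDeval; simp at hDeval
    have hrmD : D.rootMultiplicity 0 = 0 := rootMultiplicity_eq_zero (by simp [IsRoot, hDeval])
    have hsub1 : (RatFunc.X : RatFunc ℂ) ^ k - qseq k (2 * m) = φ D / φ b := by
      rw [hab, eq_div_iff hb', sub_mul, div_mul_cancel₀ _ hb', hXk, ← map_mul, ← map_sub]
    have h1 : ordZero (qseq k (2 * m)) = 0 := by
      rw [hab, ordZero_div a b hane hbne, hrma, hrmb]; simp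
    have h2 : ordZero ((RatFunc.X : RatFunc ℂ) ^ k - qseq k (2 * m)) = 0 := by
      rw [hsub1, ordZero_div D b hDne hbne, hrmD, hrmb]; simp
    refine ⟨by rw [h1, h2], fun hodd => absurd hodd (Nat.not_odd_iff_even.mpr ⟨m, by omega⟩),
      fun _ => h1⟩
  · -- odd case : s = 2 * m + 1
    obtain ⟨m, hm⟩ := ho
    subst hm
    obtain ⟨a, b, hab, ha, hb⟩ := qseq_inv k hk m
    have hm1 : (m : ℂ) + 1 ≠ 0 := by exact_mod_cast (by omega : m + 1 ≠ 0)
    have hm2 : (m : ℂ) + 2 ≠ 0 := by exact_mod_cast (by omega : m + 2 ≠ 0)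
    have hbne : b ≠ 0 := fun h => hm1 (by rw [h] at hb; simpa using hb.symm)
    have hrmb : b.rootMultiplicity 0 = 0 := rootMultiplicity_eq_zero (by simp [IsRoot, hb, hm1])
    have hb' : φ b ≠ 0 := RatFunc.algebraMap_ne_zero hbne
    set D : ℂ[X] := X ^ k * b - a with hD
    have hDeval : D.eval 0 = -1 := by simp [hD, ha, hX0]
    have hDne : D ≠ 0 := fun h => by rw [h] at hDeval; simp at hDeval
    have hrmD : D.rootMultiplicity 0 = 0 := rootMultiplicity_eq_zero (by simp [IsRoot, hDeval])
    have hD' : φ D ≠ 0 := RatFunc.algebraMap_ne_zero hDne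
    set E : ℂ[X] := X ^ k * b - a - b with hE
    have hEeval : E.eval 0 = -((m : ℂ) + 2) := by simp [hE, ha, hb, hX0]; ring
    have hEne : E ≠ 0 := fun h => by
      rw [h] at hEeval; simp at hEeval; exact hm2 (by linear_combination hEeval)
    have hrmE : E.rootMultiplicity 0 = 0 := rootMultiplicity_eq_zero (by
      simp only [IsRoot, hEeval]
      exact fun h => hm2 (by linear_combination -h)
      )
    have hsub1 : (RatFunc.X : RatFunc ℂ) ^ k - φ a / φ b = φ D / φ b := by
      rw [eq_div_iff hb', sub_mul, div_mul_cancel₀ _ hb', hXk, ← map_mul, ← map_sub]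
    have step1 : qseq k (2 * m + 1) = φ (X ^ k * b) / φ D := by
      show (RatFunc.X : RatFunc ℂ) ^ k / ((RatFunc.X : RatFunc ℂ) ^ k - qseq k (2*m)) = _
      rw [hab, hsub1, div_div_eq_mul_div, hXk, ← map_mul]
    have hsub2 : (RatFunc.X : RatFunc ℂ) ^ k - φ (X ^ k * b) / φ D = φ (X ^ k * E) / φ D := by
      rw [eq_div_iff hD', sub_mul, div_mul_cancel₀ _ hD', hXk, ← map_mul, ← map_sub]
      congr 1
      rw [hD, hE]; ring
    have hrmXb : (X ^ k * b).rootMultiplicity 0 = k := by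
      rw [rootMultiplicity_mul (mul_ne_zero (pow_ne_zero k X_ne_zero) hbne), rm0_X_pow, hrmb]; omega
    have hrmXE : (X ^ k * E).rootMultiplicity 0 = k := by
      rw [rootMultiplicity_mul (mul_ne_zero (pow_ne_zero k X_ne_zero) hEne), rm0_X_pow, hrmE]; omega
    have h1 : ordZero (qseq k (2 * m + 1)) = k := by
      rw [step1, ordZero_div _ _ (mul_ne_zero (pow_ne_zero k X_ne_zero) hbne) hDne,
        hrmXb, hrmD]
      simp
    have h2 : ordZero ((RatFunc.X : RatFunc ℂ) ^ k - qseq k (2 * m + 1)) = k := by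
      rw [step1, hsub2, ordZero_div _ _ (mul_ne_zero (pow_ne_zero k X_ne_zero) hEne) hDne,
        hrmXE, hrmD]
      simp
    refine ⟨by rw [h1, h2], fun _ => h1, fun heven => absurd heven (Nat.not_even_iff_odd.mpr ⟨m, rfl⟩)⟩
end

section
/- With g_n, b_n, c_n ∈ Z[y] defined as below, for every n ≥ 5 the following three polynomial identities hold: g_n = 2y^2·g_{n−2} + y^4·b_{n−3} + y^2(y^2−1)·c_{n−2}; b_n = y^2·g_{n−2} − y^2·c_{n−2}; c_n = y^2·b_{n−2} + y^2·c_{n−2}. -/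
/-- `F̂_n`: the Fibonacci subsets `S` of `A'_n` (for every `1 ≤ j ≤ n−2`, `2j+1 ∈ S` or
`2j+3 ∈ S`) such that every maximal run of consecutive elements of `A'_n` contained in
`S` has cardinality `1` or even cardinality. -/
def FibHat (n : ℕ) : Finset (Finset ℕ) :=
  (Aset' n).powerset.filter (fun S =>
    (∀ j ∈ Finset.Icc 1 (n - 2), 2 * j + 1 ∈ S ∨ 2 * j + 3 ∈ S) ∧
    (∀ a ∈ Finset.range (2 * n + 2), ∀ m ∈ Finset.range (2 * n + 2),
      (1 ≤ m ∧ (∀ i ∈ Finset.range m, a + 2 * i ∈ S) ∧ a - 2 ∉ S ∧ a + 2 * m ∉ S) →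
        (m = 1 ∨ Even m)))

/-- The codimension statistic `c_n(S) = |S ∩ A_n| + n + 1 − |S ∩ (S+4)|`,
where `S+4 = {a+4 : a ∈ S}`. -/
def cExp (n : ℕ) (S : Finset ℕ) : ℕ :=
  (S ∩ Aset n).card + n + 1 - (S ∩ S.image (fun a => a + 4)).card

/-- `g_n(y) = Σ_{S ∈ F̂_n} y^{c_n(S)} ∈ ℤ[y]`. -/
noncomputable def gPoly (n : ℕ) : Polynomial ℤ :=
  ∑ S ∈ FibHat n, Polynomial.X ^ cExp n S

/-- `b_n(y) = Σ_{S ∈ F̂_n, 2n−3 ∈ S, 2n−1 ∈ S} y^{c_n(S)}` for `n ≥ 3`, and `0` for `n ≤ 2`. -/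
noncomputable def bPoly (n : ℕ) : Polynomial ℤ :=
  if n ≤ 2 then 0 else
    ∑ S ∈ (FibHat n).filter (fun S => 2 * n - 3 ∈ S ∧ 2 * n - 1 ∈ S),
      Polynomial.X ^ cExp n S

/-- `c_n(y) = Σ_{S ∈ F̂_n, 2n−3 ∉ S, 2n−1 ∈ S} y^{c_n(S)}` for `n ≥ 3`, and `0` for `n ≤ 2`. -/
noncomputable def cPoly (n : ℕ) : Polynomial ℤ :=
  if n ≤ 2 then 0 else
    ∑ S ∈ (FibHat n).filter (fun S => 2 * n - 3 ∉ S ∧ 2 * n - 1 ∈ S),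
      Polynomial.X ^ cExp n S


namespace GBC

open Finset

/-- A maximal run of `S` starting at `a` with `m` elements (step 2). -/
def Run (S : Finset ℕ) (a m : ℕ) : Prop :=
  1 ≤ m ∧ (∀ i < m, a + 2 * i ∈ S) ∧ a - 2 ∉ S ∧ a + 2 * m ∉ S

/-- The run condition: every maximal run has length 1 or even length. -/
def NoOdd (S : Finset ℕ) : Prop := ∀ a m, Run S a m → m = 1 ∨ Even m

lemma mem_Aset' {n a : ℕ} : a ∈ Aset' n ↔ a % 2 = 1 ∧ 3 ≤ a ∧ a < 2 * n := by
  simp [Aset', Finset.mem_filter, Finset.mem_range]; tauto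

lemma mem_FibHat_iff {n : ℕ} (hn : 1 ≤ n) {S : Finset ℕ} :
    S ∈ FibHat n ↔ S ⊆ Aset' n ∧
      (∀ j ∈ Finset.Icc 1 (n - 2), 2 * j + 1 ∈ S ∨ 2 * j + 3 ∈ S) ∧ NoOdd S := by
  rw [FibHat, Finset.mem_filter, Finset.mem_powerset]
  constructor
  · rintro ⟨hsub, hfib, hrun⟩
    refine ⟨hsub, hfib, ?_⟩
    rintro a m ⟨hm, hmem, hl, hr⟩
    have ha : a ∈ S := by simpa using hmem 0 hm
    have ha' := mem_Aset'.1 (hsub ha)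
    have hb : a + 2 * (m - 1) ∈ S := hmem (m - 1) (by omega)
    have hb' := mem_Aset'.1 (hsub hb)
    exact hrun a (Finset.mem_range.2 (by omega)) m (Finset.mem_range.2 (by omega))
      ⟨hm, fun i hi => hmem i (Finset.mem_range.1 hi), hl, hr⟩
  · rintro ⟨hsub, hfib, hrun⟩
    exact ⟨hsub, hfib, fun a _ m _ h => hrun a m ⟨h.1, fun i hi => h.2.1 i (Finset.mem_range.2 hi), h.2.2⟩⟩

/-- The pair set `S ∩ (S + 4)`. -/
def PP (S : Finset ℕ) : Finset ℕ := S ∩ S.image (fun a => a + 4)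

lemma mem_PP {S : Finset ℕ} {a : ℕ} : a ∈ PP S ↔ a ∈ S ∧ ∃ b ∈ S, b + 4 = a := by
  simp [PP]

lemma PP_subset {S : Finset ℕ} : PP S ⊆ S := Finset.inter_subset_left

lemma cExp_eq {n : ℕ} {S : Finset ℕ} :
    cExp n S = (S ∩ Aset n).card + n + 1 - (PP S).card := rfl

lemma PP_insert {S : Finset ℕ} {x : ℕ} (h4 : 4 ≤ x) (htop : ∀ y ∈ S, y < x) :
    PP (insert x S) = if x - 4 ∈ S then insert x (PP S) else PP S := by
  have hxS : x ∉ S := fun h => absurd (htop x h) (by omega)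
  ext a
  have key : a ∈ PP (insert x S) ↔ (a = x ∧ x - 4 ∈ S) ∨ a ∈ PP S := by
    rw [mem_PP, mem_PP]
    constructor
    · rintro ⟨ha, b, hb, hb4⟩
      rcases Finset.mem_insert.1 ha with hax | ha
      · rcases Finset.mem_insert.1 hb with hbx | hb
        · omega
        · left; refine ⟨hax, ?_⟩
          have hb' : b = x - 4 := by omega
          rwa [hb'] at hb
      · rcases Finset.mem_insert.1 hb with hbx | hb
        · have := htop a ha; omega
        · right; exact ⟨ha, b, hb, hb4⟩
    · rintro (⟨rfl, hc⟩ | ⟨ha, b, hb, hb4⟩)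
      · exact ⟨Finset.mem_insert_self _ _, a - 4, Finset.mem_insert_of_mem hc, by omega⟩
      · exact ⟨Finset.mem_insert_of_mem ha, b, Finset.mem_insert_of_mem hb, hb4⟩
  rw [key]
  by_cases hc : x - 4 ∈ S
  · simp only [if_pos hc, Finset.mem_insert]; tauto
  · simp only [if_neg hc]
    constructor
    · rintro (⟨rfl, hk⟩ | h)
      · exact absurd hk hc
      · exact h
    · exact Or.inr

lemma card_PP_insert {S : Finset ℕ} {x : ℕ} (h4 : 4 ≤ x) (htop : ∀ y ∈ S, y < x) :
    (PP (insert x S)).card = (PP S).card + (if x - 4 ∈ S then 1 else 0) := by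
  have hxS : x ∉ PP S := fun h => absurd (htop x (PP_subset h)) (by omega)
  rw [PP_insert h4 htop]
  split <;> simp [Finset.card_insert_of_notMem hxS]

/-- Counting formula for `S ∩ Aset n`. -/
lemma card_inter_Aset {n : ℕ} (hn : 3 ≤ n) {S : Finset ℕ} (hS : S ⊆ Aset' n) :
    (S ∩ Aset n).card + (if 3 ∈ S then 1 else 0) + (if 2 * n - 1 ∈ S then 1 else 0)
      = S.card := by
  have h1 : S ∩ Aset n = S.filter (fun a => ¬(a = 3 ∨ a = 2 * n - 1)) := by
    ext a
    simp only [Finset.mem_inter, Aset, Finset.mem_filter]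
    constructor
    · rintro ⟨ha, -, h3, h5⟩; exact ⟨ha, by tauto⟩
    · rintro ⟨ha, h⟩; exact ⟨ha, hS ha, by tauto, by tauto⟩
  have h2 : S.filter (fun a => (a = 3 ∨ a = 2 * n - 1)) =
      (if 3 ∈ S then {3} else ∅) ∪ (if 2 * n - 1 ∈ S then {2 * n - 1} else ∅) := by
    ext a
    simp only [Finset.mem_filter, Finset.mem_union]
    constructor
    · rintro ⟨ha, rfl | rfl⟩
      · left; simp [ha]
      · right; simp [ha]
    · intro h
      rcases h with h | h <;> split at h <;> simp_all
  have h3 : (S.filter (fun a => (a = 3 ∨ a = 2 * n - 1))).card =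
      (if 3 ∈ S then 1 else 0) + (if 2 * n - 1 ∈ S then 1 else 0) := by
    rw [h2, Finset.card_union_of_disjoint]
    · split <;> split <;> simp
    · split <;> split <;> simp [Finset.disjoint_singleton_left] <;> omega
  have h4 := Finset.card_filter_add_card_filter_not
    (s := S) (p := fun a => (a = 3 ∨ a = 2 * n - 1))
  rw [h1]
  omega

lemma card_le_of_subset_Aset' {n : ℕ} (hn : 3 ≤ n) {S : Finset ℕ} (hS : S ⊆ Aset' n) :
    S.card ≤ (S ∩ Aset n).card + 2 := by
  have := card_inter_Aset hn hS
  split_ifs at this <;> omega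

end GBC

namespace GBC

open Finset

lemma noOdd_insert_single_iff {T : Finset ℕ} {x : ℕ} (hgap : ∀ y ∈ T, y + 4 ≤ x) :
    NoOdd (insert x T) ↔ NoOdd T := by
  constructor
  · intro h a k hr
    obtain ⟨hk, hmem, hl, hr'⟩ := hr
    apply h a k
    have ha : a ∈ T := by simpa using hmem 0 hk
    have hlast : a + 2 * (k - 1) ∈ T := hmem (k - 1) (by omega)
    refine ⟨hk, fun i hi => Finset.mem_insert_of_mem (hmem i hi), ?_, ?_⟩
    · intro hc
      rcases Finset.mem_insert.1 hc with h1 | h1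
      · have := hgap a ha; omega
      · exact hl h1
    · intro hc
      rcases Finset.mem_insert.1 hc with h1 | h1
      · have := hgap _ hlast; omega
      · exact hr' h1
  · intro h a k hr
    obtain ⟨hk, hmem, hl, hr'⟩ := hr
    by_cases hax : a = x
    · by_cases hk1 : k = 1
      · exact Or.inl hk1
      · exfalso
        have h2 : a + 2 * 1 ∈ insert x T := hmem 1 (by omega)
        rcases Finset.mem_insert.1 h2 with h1 | h1
        · omega
        · have := hgap _ h1; omega
    · have ha : a ∈ T := by
        have := hmem 0 hk
        rcases Finset.mem_insert.1 (by simpa using this) with h1 | h1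
        · exact absurd h1 hax
        · exact h1
      have hmemT : ∀ i, i < k → a + 2 * i ∈ T := by
        intro i
        induction i with
        | zero => intro _; simpa using ha
        | succ i ih =>
          intro hi
          have hprev : a + 2 * i ∈ T := ih (by omega)
          have hcur := hmem (i + 1) hi
          rcases Finset.mem_insert.1 hcur with h1 | h1
          · have := hgap _ hprev; omega
          · exact h1
      apply h a k
      refine ⟨hk, hmemT, fun hc => hl (Finset.mem_insert_of_mem hc),
        fun hc => hr' (Finset.mem_insert_of_mem hc)⟩

lemma noOdd_insert_pair_iff {T : Finset ℕ} {x : ℕ} (hgap : ∀ y ∈ T, y + 4 ≤ x) :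
    NoOdd (insert x (insert (x + 2) T)) ↔ NoOdd T := by
  constructor
  · intro h a k hr
    obtain ⟨hk, hmem, hl, hr'⟩ := hr
    apply h a k
    have ha : a ∈ T := by simpa using hmem 0 hk
    have hlast : a + 2 * (k - 1) ∈ T := hmem (k - 1) (by omega)
    have hga := hgap a ha
    have hgl := hgap _ hlast
    refine ⟨hk, fun i hi => Finset.mem_insert_of_mem (Finset.mem_insert_of_mem (hmem i hi)),
      ?_, ?_⟩
    · intro hc
      rcases Finset.mem_insert.1 hc with h1 | hc
      · omega
      rcases Finset.mem_insert.1 hc with h1 | h1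
      · omega
      · exact hl h1
    · intro hc
      rcases Finset.mem_insert.1 hc with h1 | hc
      · omega
      rcases Finset.mem_insert.1 hc with h1 | h1
      · omega
      · exact hr' h1
  · intro h a k hr
    obtain ⟨hk, hmem, hl, hr'⟩ := hr
    have ha := hmem 0 hk
    rw [Nat.mul_zero, Nat.add_zero] at ha
    rcases Finset.mem_insert.1 ha with hax | ha
    · -- a = x
      by_cases hk2 : 3 ≤ k
      · exfalso
        have h2 := hmem 2 (by omega)
        rcases Finset.mem_insert.1 h2 with h1 | h2
        · omega
        rcases Finset.mem_insert.1 h2 with h1 | h1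
        · omega
        · have := hgap _ h1; omega
      · by_cases hk1 : k = 1
        · exact Or.inl hk1
        · -- k = 2
          right; exact ⟨1, by omega⟩
    rcases Finset.mem_insert.1 ha with hax | ha
    · -- a = x + 2, then a - 2 = x ∈ S'
      exfalso
      apply hl
      have he : a - 2 = x := by omega
      rw [he]; exact Finset.mem_insert_self _ _
    · -- a ∈ T
      have hax : a + 4 ≤ x := hgap a ha
      have hmemT : ∀ i, i < k → a + 2 * i ∈ T := by
        intro i
        induction i with
        | zero => intro _; simpa using ha
        | succ i ih =>
          intro hi
          have hprev : a + 2 * i ∈ T := ih (by omega)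
          have hgp := hgap _ hprev
          have hcur := hmem (i + 1) hi
          rcases Finset.mem_insert.1 hcur with h1 | hcur
          · omega
          rcases Finset.mem_insert.1 hcur with h1 | h1
          · omega
          · exact h1
      apply h a k
      exact ⟨hk, hmemT,
        fun hc => hl (Finset.mem_insert_of_mem (Finset.mem_insert_of_mem hc)),
        fun hc => hr' (Finset.mem_insert_of_mem (Finset.mem_insert_of_mem hc))⟩

lemma noOdd_extend {T : Finset ℕ} {b : ℕ} (hb : b ∈ T) (hb2 : b - 2 ∈ T) (h2b : 2 ≤ b)
    (htop : ∀ y ∈ T, y ≤ b) (hT : NoOdd T) :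
    NoOdd (insert (b + 4) (insert (b + 2) T)) := by
  intro a k hr
  obtain ⟨hk, hmem, hl, hr'⟩ := hr
  have ha := hmem 0 hk
  rw [Nat.mul_zero, Nat.add_zero] at ha
  rcases Finset.mem_insert.1 ha with hax | ha
  · -- a = b + 4: a - 2 = b + 2 ∈ S'
    exfalso; apply hl
    have he : a - 2 = b + 2 := by omega
    rw [he]
    exact Finset.mem_insert_of_mem (Finset.mem_insert_self _ _)
  rcases Finset.mem_insert.1 ha with hax | ha
  · -- a = b + 2: a - 2 = b ∈ T
    exfalso; apply hl
    have : a - 2 = b := by omega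
    rw [this]
    exact Finset.mem_insert_of_mem (Finset.mem_insert_of_mem hb)
  · -- a ∈ T, so a ≤ b
    have hab : a ≤ b := htop a ha
    have hlast := hmem (k - 1) (by omega)
    rcases Finset.mem_insert.1 hlast with hlx | hlast
    · -- last = b + 4, so k ≥ 3
      have hk3 : 3 ≤ k := by omega
      by_cases hk3' : k = 3
      · -- then a = b, a - 2 = b - 2 ∈ T : contradiction
        exfalso; apply hl
        have : a - 2 = b - 2 := by omega
        rw [this]
        exact Finset.mem_insert_of_mem (Finset.mem_insert_of_mem hb2)
      · -- run (a, k-2) of T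
        have hrT : Run T a (k - 2) := by
          refine ⟨by omega, ?_, ?_, ?_⟩
          · intro i hi
            have hcur := hmem i (by omega)
            rcases Finset.mem_insert.1 hcur with h1 | hcur
            · omega
            rcases Finset.mem_insert.1 hcur with h1 | h1
            · omega
            · exact h1
          · intro hc
            exact hl (Finset.mem_insert_of_mem (Finset.mem_insert_of_mem hc))
          · intro hc
            have := htop _ hc; omega
        rcases hT a (k - 2) hrT with h1 | h1
        · omega
        · right
          rcases h1 with ⟨r, hrr⟩
          exact ⟨r + 1, by omega⟩
    rcases Finset.mem_insert.1 hlast with hlx | hlast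
    · -- last = b + 2, then a + 2k = b + 4 ∈ S'
      exfalso; apply hr'
      have : a + 2 * k = b + 4 := by omega
      rw [this]
      exact Finset.mem_insert_self _ _
    · -- last ∈ T: whole run in T
      have hlb := htop _ hlast
      have hrT : Run T a k := by
        refine ⟨hk, ?_, ?_, ?_⟩
        · intro i hi
          have hcur := hmem i hi
          rcases Finset.mem_insert.1 hcur with h1 | hcur
          · omega
          rcases Finset.mem_insert.1 hcur with h1 | h1
          · omega
          · exact h1
        · intro hc
          exact hl (Finset.mem_insert_of_mem (Finset.mem_insert_of_mem hc))
        · intro hc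
          exact hr' (Finset.mem_insert_of_mem (Finset.mem_insert_of_mem hc))
      exact hT a k hrT

lemma noOdd_truncate {S : Finset ℕ} {b : ℕ} (h2 : b + 2 ∈ S) (h4 : b + 4 ∈ S)
    (hpart : ∀ y ∈ S, y ≤ b ∨ y = b + 2 ∨ y = b + 4) (hS : NoOdd S) :
    NoOdd ((S.erase (b + 4)).erase (b + 2)) := by
  set T := (S.erase (b + 4)).erase (b + 2) with hTdef
  have hmemT : ∀ y, y ∈ T ↔ y ∈ S ∧ y ≠ b + 2 ∧ y ≠ b + 4 := by
    intro y
    simp only [hTdef, Finset.mem_erase]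
    tauto
  have hTb : ∀ y ∈ T, y ≤ b := by
    intro y hy
    rcases (hmemT y).1 hy with ⟨hyS, hy2, hy4⟩
    rcases hpart y hyS with h | h | h <;> omega
  intro a k hr
  obtain ⟨hk, hmem, hl, hr'⟩ := hr
  have ha : a ∈ T := by simpa using hmem 0 hk
  have hab : a ≤ b := hTb a ha
  have hlast : a + 2 * (k - 1) ∈ T := hmem (k - 1) (by omega)
  have hlb : a + 2 * (k - 1) ≤ b := hTb _ hlast
  have hlS : ∀ i < k, a + 2 * i ∈ S := fun i hi => ((hmemT _).1 (hmem i hi)).1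
  have hlnotS : a - 2 ∉ S := by
    intro hc
    apply hl
    rw [hmemT]
    exact ⟨hc, by omega, by omega⟩
  by_cases hnext : a + 2 * k ∈ S
  · -- a + 2k = b + 2, extend run to (a, k+2) in S
    have hke : a + 2 * k = b + 2 := by
      rcases hpart _ hnext with h | h | h
      · exfalso; apply hr'; rw [hmemT]; exact ⟨hnext, by omega, by omega⟩
      · exact h
      · omega
    have hrS : Run S a (k + 2) := by
      refine ⟨by omega, ?_, hlnotS, ?_⟩
      · intro i hi
        by_cases hik : i < k
        · exact hlS i hik
        · by_cases hik' : i = k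
          · rw [hik']; rwa [hke] at hnext ⊢
          · have : a + 2 * i = b + 4 := by omega
            rw [this]; exact h4
      · intro hc
        rcases hpart _ hc with h | h | h <;> omega
    rcases hS a (k + 2) hrS with h1 | h1
    · omega
    · right
      rcases h1 with ⟨r, hrr⟩
      exact ⟨r - 1, by omega⟩
  · -- run of S directly
    exact hS a k ⟨hk, hlS, hlnotS, hnext⟩

end GBC

namespace GBC

open Finset Polynomial

lemma cExp_formula {n : ℕ} (hn : 3 ≤ n) {S : Finset ℕ} (hS : S ⊆ Aset' n) :
    cExp n S + (if 3 ∈ S then 1 else 0) + (if 2 * n - 1 ∈ S then 1 else 0) + (PP S).card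
      = S.card + n + 1 := by
  have h1 := card_inter_Aset hn hS
  have h2 := card_le_of_subset_Aset' hn hS
  have h3 := Finset.card_le_card (PP_subset (S := S))
  rw [cExp_eq]
  omega

lemma bij2 (m : ℕ) :
    ∑ S ∈ (FibHat (m + 5)).filter (fun S => 2 * m + 7 ∉ S ∧ 2 * m + 9 ∈ S),
        (X : Polynomial ℤ) ^ cExp (m + 5) S
      = ∑ T ∈ (FibHat (m + 3)).filter (fun T => 2 * m + 5 ∈ T),
          (X : Polynomial ℤ) ^ (cExp (m + 3) T + 2) := by
  apply Finset.sum_nbij' (i := fun S => S.erase (2 * m + 9)) (j := fun T => insert (2 * m + 9) T)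
  · -- hi
    intro S hS
    rw [Finset.mem_filter, mem_FibHat_iff (by omega)] at hS
    obtain ⟨⟨hsub, hfib, hrun⟩, h7, h9⟩ := hS
    set T := S.erase (2 * m + 9) with hT
    have hmemT : ∀ x, x ∈ T ↔ x ∈ S ∧ x ≠ 2 * m + 9 := by
      intro x; rw [hT, Finset.mem_erase]; tauto
    have hTsub : T ⊆ Aset' (m + 3) := by
      intro y hy
      obtain ⟨hyS, hy9⟩ := (hmemT y).1 hy
      have hb := mem_Aset'.1 (hsub hyS)
      have h7' : y ≠ 2 * m + 7 := fun h => h7 (h ▸ hyS)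
      exact mem_Aset'.2 ⟨hb.1, hb.2.1, by omega⟩
    have h5S : 2 * m + 5 ∈ S := by
      rcases hfib (m + 2) (Finset.mem_Icc.2 (by omega)) with h | h
      · have e : 2 * (m + 2) + 1 = 2 * m + 5 := by omega
        rwa [e] at h
      · have e : 2 * (m + 2) + 3 = 2 * m + 7 := by omega
        rw [e] at h; exact absurd h h7
    have hins : insert (2 * m + 9) T = S := Finset.insert_erase h9
    rw [Finset.mem_filter, mem_FibHat_iff (by omega)]
    refine ⟨⟨hTsub, ?_, ?_⟩, (hmemT _).2 ⟨h5S, by omega⟩⟩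
    · intro j hj
      rw [Finset.mem_Icc] at hj
      rcases hfib j (Finset.mem_Icc.2 (by omega)) with h | h
      · exact Or.inl ((hmemT _).2 ⟨h, by omega⟩)
      · exact Or.inr ((hmemT _).2 ⟨h, by omega⟩)
    · have hgap : ∀ y ∈ T, y + 4 ≤ 2 * m + 9 := by
        intro y hy
        have := mem_Aset'.1 (hTsub hy); omega
      exact (noOdd_insert_single_iff hgap).1 (hins ▸ hrun)
  · -- hj
    intro T hT
    rw [Finset.mem_filter, mem_FibHat_iff (by omega)] at hT
    obtain ⟨⟨hsub, hfib, hrun⟩, h5⟩ := hT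
    have hb : ∀ y ∈ T, y % 2 = 1 ∧ 3 ≤ y ∧ y < 2 * m + 6 := by
      intro y hy
      have := mem_Aset'.1 (hsub hy); exact ⟨this.1, this.2.1, by omega⟩
    have h9T : 2 * m + 9 ∉ T := fun h => by have := hb _ h; omega
    have h7T : 2 * m + 7 ∉ T := fun h => by have := hb _ h; omega
    rw [Finset.mem_filter, mem_FibHat_iff (by omega)]
    refine ⟨⟨?_, ?_, ?_⟩, ?_, Finset.mem_insert_self _ _⟩
    · intro y hy
      rcases Finset.mem_insert.1 hy with rfl | hy
      · exact mem_Aset'.2 ⟨by omega, by omega, by omega⟩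
      · have := hb y hy
        exact mem_Aset'.2 ⟨this.1, this.2.1, by omega⟩
    · intro j hj
      rw [Finset.mem_Icc] at hj
      by_cases hjm : j ≤ m + 1
      · rcases hfib j (Finset.mem_Icc.2 (by omega)) with h | h
        · exact Or.inl (Finset.mem_insert_of_mem h)
        · exact Or.inr (Finset.mem_insert_of_mem h)
      · by_cases hjm2 : j = m + 2
        · left
          have e : 2 * j + 1 = 2 * m + 5 := by omega
          rw [e]; exact Finset.mem_insert_of_mem h5
        · right
          have e : 2 * j + 3 = 2 * m + 9 := by omega
          rw [e]; exact Finset.mem_insert_self _ _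
    · have hgap : ∀ y ∈ T, y + 4 ≤ 2 * m + 9 := fun y hy => by have := hb y hy; omega
      exact (noOdd_insert_single_iff hgap).2 hrun
    · intro hc
      rcases Finset.mem_insert.1 hc with h | h
      · omega
      · exact h7T h
  · -- left inverse
    intro S hS
    rw [Finset.mem_filter] at hS
    exact Finset.insert_erase hS.2.2
  · -- right inverse
    intro T hT
    rw [Finset.mem_filter, mem_FibHat_iff (by omega)] at hT
    apply Finset.erase_insert
    intro h
    have := mem_Aset'.1 (hT.1.1 h); omega
  · -- weights
    intro S hS
    rw [Finset.mem_filter, mem_FibHat_iff (by omega)] at hS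
    obtain ⟨⟨hsub, hfib, hrun⟩, h7, h9⟩ := hS
    set T := S.erase (2 * m + 9) with hT
    have hmemT : ∀ x, x ∈ T ↔ x ∈ S ∧ x ≠ 2 * m + 9 := by
      intro x; rw [hT, Finset.mem_erase]; tauto
    have hTsub : T ⊆ Aset' (m + 3) := by
      intro y hy
      obtain ⟨hyS, hy9⟩ := (hmemT y).1 hy
      have hbd := mem_Aset'.1 (hsub hyS)
      have h7' : y ≠ 2 * m + 7 := fun h => h7 (h ▸ hyS)
      exact mem_Aset'.2 ⟨hbd.1, hbd.2.1, by omega⟩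
    have h5S : 2 * m + 5 ∈ S := by
      rcases hfib (m + 2) (Finset.mem_Icc.2 (by omega)) with h | h
      · have e : 2 * (m + 2) + 1 = 2 * m + 5 := by omega
        rwa [e] at h
      · have e : 2 * (m + 2) + 3 = 2 * m + 7 := by omega
        rw [e] at h; exact absurd h h7
    have h5T : 2 * m + 5 ∈ T := (hmemT _).2 ⟨h5S, by omega⟩
    have h9T : 2 * m + 9 ∉ T := fun h => ((hmemT _).1 h).2 rfl
    have hins : insert (2 * m + 9) T = S := Finset.insert_erase h9
    have htop : ∀ y ∈ T, y < 2 * m + 9 := by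
      intro y hy; have := mem_Aset'.1 (hTsub hy); omega
    -- cards
    have hcard : S.card = T.card + 1 := by
      rw [← hins, Finset.card_insert_of_notMem h9T]
    have hPP : (PP S).card = (PP T).card + 1 := by
      have := card_PP_insert (S := T) (x := 2 * m + 9) (by omega) htop
      rw [hins] at this
      have e : 2 * m + 9 - 4 = 2 * m + 5 := by omega
      rw [e, if_pos h5T] at this
      exact this
    have hfS := cExp_formula (by omega) hsub
    have hfT := cExp_formula (by omega) hTsub
    have e1 : 2 * (m + 5) - 1 = 2 * m + 9 := by omega
    have e2 : 2 * (m + 3) - 1 = 2 * m + 5 := by omega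
    rw [e1, if_pos h9] at hfS
    rw [e2, if_pos h5T] at hfT
    have h3iff : (3 ∈ S) ↔ (3 ∈ T) := by
      rw [hmemT]; constructor
      · intro h; exact ⟨h, by omega⟩
      · tauto
    congr 1
    by_cases h3 : 3 ∈ T
    · rw [if_pos (h3iff.2 h3)] at hfS
      rw [if_pos h3] at hfT
      omega
    · rw [if_neg (fun hc => h3 (h3iff.1 hc))] at hfS
      rw [if_neg h3] at hfT
      omega

end GBC

namespace GBC

open Finset Polynomial

lemma bij3 (m : ℕ) :
    ∑ S ∈ (FibHat (m + 5)).filter (fun S => 2 * m + 9 ∉ S ∧ 2 * m + 5 ∉ S),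
        (X : Polynomial ℤ) ^ cExp (m + 5) S
      = ∑ T ∈ (FibHat (m + 3)).filter (fun T => 2 * m + 5 ∉ T),
          (X : Polynomial ℤ) ^ (cExp (m + 3) T + 2) := by
  apply Finset.sum_nbij' (i := fun S => S.erase (2 * m + 7)) (j := fun T => insert (2 * m + 7) T)
  · -- hi
    intro S hS
    rw [Finset.mem_filter, mem_FibHat_iff (by omega)] at hS
    obtain ⟨⟨hsub, hfib, hrun⟩, h9, h5⟩ := hS
    have h7S : 2 * m + 7 ∈ S := by
      rcases hfib (m + 3) (Finset.mem_Icc.2 (by omega)) with h | h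
      · have e : 2 * (m + 3) + 1 = 2 * m + 7 := by omega
        rwa [e] at h
      · have e : 2 * (m + 3) + 3 = 2 * m + 9 := by omega
        rw [e] at h; exact absurd h h9
    set T := S.erase (2 * m + 7) with hT
    have hmemT : ∀ x, x ∈ T ↔ x ∈ S ∧ x ≠ 2 * m + 7 := by
      intro x; rw [hT, Finset.mem_erase]; tauto
    have hTsub : T ⊆ Aset' (m + 3) := by
      intro y hy
      obtain ⟨hyS, hy7⟩ := (hmemT y).1 hy
      have hb := mem_Aset'.1 (hsub hyS)
      have h9' : y ≠ 2 * m + 9 := fun h => h9 (h ▸ hyS)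
      exact mem_Aset'.2 ⟨hb.1, hb.2.1, by omega⟩
    have hins : insert (2 * m + 7) T = S := Finset.insert_erase h7S
    rw [Finset.mem_filter, mem_FibHat_iff (by omega)]
    refine ⟨⟨hTsub, ?_, ?_⟩, fun hc => h5 ((hmemT _).1 hc).1⟩
    · intro j hj
      rw [Finset.mem_Icc] at hj
      rcases hfib j (Finset.mem_Icc.2 (by omega)) with h | h
      · exact Or.inl ((hmemT _).2 ⟨h, by omega⟩)
      · exact Or.inr ((hmemT _).2 ⟨h, by omega⟩)
    · have hgap : ∀ y ∈ T, y + 4 ≤ 2 * m + 7 := by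
        intro y hy
        have hb := mem_Aset'.1 (hTsub hy)
        have h5' : y ≠ 2 * m + 5 := fun h => h5 (h ▸ ((hmemT y).1 hy).1)
        omega
      exact (noOdd_insert_single_iff hgap).1 (hins ▸ hrun)
  · -- hj
    intro T hT
    rw [Finset.mem_filter, mem_FibHat_iff (by omega)] at hT
    obtain ⟨⟨hsub, hfib, hrun⟩, h5⟩ := hT
    have hb : ∀ y ∈ T, y % 2 = 1 ∧ 3 ≤ y ∧ y < 2 * m + 6 := by
      intro y hy
      have := mem_Aset'.1 (hsub hy); exact ⟨this.1, this.2.1, by omega⟩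
    have hb' : ∀ y ∈ T, y ≤ 2 * m + 3 := by
      intro y hy
      have := hb y hy
      have : y ≠ 2 * m + 5 := fun h => h5 (h ▸ hy)
      have := hb y hy
      omega
    have h9T : 2 * m + 9 ∉ T := fun h => by have := hb' _ h; omega
    have h7T : 2 * m + 7 ∉ T := fun h => by have := hb' _ h; omega
    rw [Finset.mem_filter, mem_FibHat_iff (by omega)]
    refine ⟨⟨?_, ?_, ?_⟩, ?_, ?_⟩
    · intro y hy
      rcases Finset.mem_insert.1 hy with rfl | hy
      · exact mem_Aset'.2 ⟨by omega, by omega, by omega⟩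
      · have := hb y hy
        exact mem_Aset'.2 ⟨this.1, this.2.1, by omega⟩
    · intro j hj
      rw [Finset.mem_Icc] at hj
      by_cases hjm : j ≤ m + 1
      · rcases hfib j (Finset.mem_Icc.2 (by omega)) with h | h
        · exact Or.inl (Finset.mem_insert_of_mem h)
        · exact Or.inr (Finset.mem_insert_of_mem h)
      · by_cases hjm2 : j = m + 2
        · right
          have e : 2 * j + 3 = 2 * m + 7 := by omega
          rw [e]; exact Finset.mem_insert_self _ _
        · left
          have e : 2 * j + 1 = 2 * m + 7 := by omega
          rw [e]; exact Finset.mem_insert_self _ _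
    · have hgap : ∀ y ∈ T, y + 4 ≤ 2 * m + 7 := fun y hy => by have := hb' y hy; omega
      exact (noOdd_insert_single_iff hgap).2 hrun
    · intro hc
      rcases Finset.mem_insert.1 hc with h | h
      · omega
      · exact h9T h
    · intro hc
      rcases Finset.mem_insert.1 hc with h | h
      · omega
      · exact h5 h
  · -- left inverse
    intro S hS
    rw [Finset.mem_filter, mem_FibHat_iff (by omega)] at hS
    obtain ⟨⟨hsub, hfib, hrun⟩, h9, h5⟩ := hS
    have h7S : 2 * m + 7 ∈ S := by
      rcases hfib (m + 3) (Finset.mem_Icc.2 (by omega)) with h | h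
      · have e : 2 * (m + 3) + 1 = 2 * m + 7 := by omega
        rwa [e] at h
      · have e : 2 * (m + 3) + 3 = 2 * m + 9 := by omega
        rw [e] at h; exact absurd h h9
    exact Finset.insert_erase h7S
  · -- right inverse
    intro T hT
    rw [Finset.mem_filter, mem_FibHat_iff (by omega)] at hT
    apply Finset.erase_insert
    intro h
    have := mem_Aset'.1 (hT.1.1 h); omega
  · -- weights
    intro S hS
    rw [Finset.mem_filter, mem_FibHat_iff (by omega)] at hS
    obtain ⟨⟨hsub, hfib, hrun⟩, h9, h5⟩ := hS
    have h7S : 2 * m + 7 ∈ S := by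
      rcases hfib (m + 3) (Finset.mem_Icc.2 (by omega)) with h | h
      · have e : 2 * (m + 3) + 1 = 2 * m + 7 := by omega
        rwa [e] at h
      · have e : 2 * (m + 3) + 3 = 2 * m + 9 := by omega
        rw [e] at h; exact absurd h h9
    set T := S.erase (2 * m + 7) with hT
    have hmemT : ∀ x, x ∈ T ↔ x ∈ S ∧ x ≠ 2 * m + 7 := by
      intro x; rw [hT, Finset.mem_erase]; tauto
    have hTsub : T ⊆ Aset' (m + 3) := by
      intro y hy
      obtain ⟨hyS, hy7⟩ := (hmemT y).1 hy
      have hb := mem_Aset'.1 (hsub hyS)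
      have h9' : y ≠ 2 * m + 9 := fun h => h9 (h ▸ hyS)
      exact mem_Aset'.2 ⟨hb.1, hb.2.1, by omega⟩
    have h3TS : 2 * m + 3 ∈ T := by
      have h3S : 2 * m + 3 ∈ S := by
        rcases hfib (m + 1) (Finset.mem_Icc.2 (by omega)) with h | h
        · have e : 2 * (m + 1) + 1 = 2 * m + 3 := by omega
          rwa [e] at h
        · have e : 2 * (m + 1) + 3 = 2 * m + 5 := by omega
          rw [e] at h; exact absurd h h5
      exact (hmemT _).2 ⟨h3S, by omega⟩
    have h7T : 2 * m + 7 ∉ T := fun h => ((hmemT _).1 h).2 rfl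
    have h5T : 2 * m + 5 ∉ T := fun h => h5 ((hmemT _).1 h).1
    have hins : insert (2 * m + 7) T = S := Finset.insert_erase h7S
    have htop : ∀ y ∈ T, y < 2 * m + 7 := by
      intro y hy; have := mem_Aset'.1 (hTsub hy); omega
    have hcard : S.card = T.card + 1 := by
      rw [← hins, Finset.card_insert_of_notMem h7T]
    have hPP : (PP S).card = (PP T).card + 1 := by
      have hc := card_PP_insert (S := T) (x := 2 * m + 7) (by omega) htop
      rw [hins] at hc
      have e : 2 * m + 7 - 4 = 2 * m + 3 := by omega
      rw [e, if_pos h3TS] at hc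
      exact hc
    have hfS := cExp_formula (by omega) hsub
    have hfT := cExp_formula (by omega) hTsub
    have e1 : 2 * (m + 5) - 1 = 2 * m + 9 := by omega
    have e2 : 2 * (m + 3) - 1 = 2 * m + 5 := by omega
    rw [e1, if_neg h9] at hfS
    rw [e2, if_neg h5T] at hfT
    have h3iff : (3 ∈ S) ↔ (3 ∈ T) := by
      rw [hmemT]; constructor
      · intro h; exact ⟨h, by omega⟩
      · tauto
    congr 1
    by_cases h3 : 3 ∈ T
    · rw [if_pos (h3iff.2 h3)] at hfS
      rw [if_pos h3] at hfT
      omega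
    · rw [if_neg (fun hc => h3 (h3iff.1 hc))] at hfS
      rw [if_neg h3] at hfT
      omega

lemma bij5 (m : ℕ) :
    ∑ S ∈ (FibHat (m + 5)).filter (fun S => 2 * m + 9 ∉ S ∧ (2 * m + 5 ∈ S ∧ 2 * m + 3 ∉ S)),
        (X : Polynomial ℤ) ^ cExp (m + 5) S
      = ∑ T ∈ (FibHat (m + 3)).filter (fun T => 2 * m + 3 ∉ T ∧ 2 * m + 5 ∈ T),
          (X : Polynomial ℤ) ^ (cExp (m + 3) T + 4) := by
  apply Finset.sum_nbij' (i := fun S => S.erase (2 * m + 7)) (j := fun T => insert (2 * m + 7) T)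
  · -- hi
    intro S hS
    rw [Finset.mem_filter, mem_FibHat_iff (by omega)] at hS
    obtain ⟨⟨hsub, hfib, hrun⟩, h9, h5, h3⟩ := hS
    have h7S : 2 * m + 7 ∈ S := by
      rcases hfib (m + 3) (Finset.mem_Icc.2 (by omega)) with h | h
      · have e : 2 * (m + 3) + 1 = 2 * m + 7 := by omega
        rwa [e] at h
      · have e : 2 * (m + 3) + 3 = 2 * m + 9 := by omega
        rw [e] at h; exact absurd h h9
    set T := S.erase (2 * m + 7) with hT
    have hmemT : ∀ x, x ∈ T ↔ x ∈ S ∧ x ≠ 2 * m + 7 := by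
      intro x; rw [hT, Finset.mem_erase]; tauto
    have hTsub : T ⊆ Aset' (m + 3) := by
      intro y hy
      obtain ⟨hyS, hy7⟩ := (hmemT y).1 hy
      have hb := mem_Aset'.1 (hsub hyS)
      have h9' : y ≠ 2 * m + 9 := fun h => h9 (h ▸ hyS)
      exact mem_Aset'.2 ⟨hb.1, hb.2.1, by omega⟩
    have h5T : 2 * m + 5 ∈ T := (hmemT _).2 ⟨h5, by omega⟩
    have hins : insert (2 * m + 7) T = S := Finset.insert_erase h7S
    rw [Finset.mem_filter, mem_FibHat_iff (by omega)]
    refine ⟨⟨hTsub, ?_, ?_⟩, fun hc => h3 ((hmemT _).1 hc).1, h5T⟩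
    · intro j hj
      rw [Finset.mem_Icc] at hj
      rcases hfib j (Finset.mem_Icc.2 (by omega)) with h | h
      · exact Or.inl ((hmemT _).2 ⟨h, by omega⟩)
      · exact Or.inr ((hmemT _).2 ⟨h, by omega⟩)
    · -- NoOdd T via pair/single gap through T' = T.erase (2m+5)
      set T' := T.erase (2 * m + 5) with hT'
      have hmemT' : ∀ x, x ∈ T' ↔ x ∈ S ∧ x ≠ 2 * m + 7 ∧ x ≠ 2 * m + 5 := by
        intro x; rw [hT', Finset.mem_erase, hmemT]; tauto
      have hgap' : ∀ y ∈ T', y + 4 ≤ 2 * m + 5 := by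
        intro y hy
        obtain ⟨hyS, hy7, hy5⟩ := (hmemT' y).1 hy
        have hb := mem_Aset'.1 (hsub hyS)
        have h9' : y ≠ 2 * m + 9 := fun h => h9 (h ▸ hyS)
        have h3' : y ≠ 2 * m + 3 := fun h => h3 (h ▸ hyS)
        omega
      have hT'ins : insert (2 * m + 5) T' = T := Finset.insert_erase h5T
      have hSins : insert (2 * m + 5) (insert (2 * m + 5 + 2) T') = S := by
        have e : 2 * m + 5 + 2 = 2 * m + 7 := by omega
        rw [e, Finset.insert_comm, hT'ins, hins]
      have hrun' : NoOdd T' := (noOdd_insert_pair_iff hgap').1 (hSins ▸ hrun)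
      rw [← hT'ins]
      exact (noOdd_insert_single_iff hgap').2 hrun'
  · -- hj
    intro T hT
    rw [Finset.mem_filter, mem_FibHat_iff (by omega)] at hT
    obtain ⟨⟨hsub, hfib, hrun⟩, h3, h5⟩ := hT
    have hb : ∀ y ∈ T, y % 2 = 1 ∧ 3 ≤ y ∧ y < 2 * m + 6 := by
      intro y hy
      have := mem_Aset'.1 (hsub hy); exact ⟨this.1, this.2.1, by omega⟩
    have h9T : 2 * m + 9 ∉ T := fun h => by have := hb _ h; omega
    have h7T : 2 * m + 7 ∉ T := fun h => by have := hb _ h; omega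
    rw [Finset.mem_filter, mem_FibHat_iff (by omega)]
    refine ⟨⟨?_, ?_, ?_⟩, ?_, ?_, ?_⟩
    · intro y hy
      rcases Finset.mem_insert.1 hy with rfl | hy
      · exact mem_Aset'.2 ⟨by omega, by omega, by omega⟩
      · have := hb y hy
        exact mem_Aset'.2 ⟨this.1, this.2.1, by omega⟩
    · intro j hj
      rw [Finset.mem_Icc] at hj
      by_cases hjm : j ≤ m + 1
      · rcases hfib j (Finset.mem_Icc.2 (by omega)) with h | h
        · exact Or.inl (Finset.mem_insert_of_mem h)
        · exact Or.inr (Finset.mem_insert_of_mem h)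
      · by_cases hjm2 : j = m + 2
        · left
          have e : 2 * j + 1 = 2 * m + 5 := by omega
          rw [e]; exact Finset.mem_insert_of_mem h5
        · left
          have e : 2 * j + 1 = 2 * m + 7 := by omega
          rw [e]; exact Finset.mem_insert_self _ _
    · -- NoOdd (insert (2m+7) T)
      set T' := T.erase (2 * m + 5) with hT'
      have hmemT' : ∀ x, x ∈ T' ↔ x ∈ T ∧ x ≠ 2 * m + 5 := by
        intro x; rw [hT', Finset.mem_erase]; tauto
      have hgap' : ∀ y ∈ T', y + 4 ≤ 2 * m + 5 := by
        intro y hy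
        obtain ⟨hyT, hy5⟩ := (hmemT' y).1 hy
        have hbb := hb y hyT
        have h3' : y ≠ 2 * m + 3 := fun h => h3 (h ▸ hyT)
        omega
      have hT'ins : insert (2 * m + 5) T' = T := Finset.insert_erase h5
      have hrun' : NoOdd T' := (noOdd_insert_single_iff hgap').1 (hT'ins ▸ hrun)
      have : NoOdd (insert (2 * m + 5) (insert (2 * m + 5 + 2) T')) :=
        (noOdd_insert_pair_iff hgap').2 hrun'
      have e : 2 * m + 5 + 2 = 2 * m + 7 := by omega
      rw [e, Finset.insert_comm, hT'ins] at this
      exact this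
    · intro hc
      rcases Finset.mem_insert.1 hc with h | h
      · omega
      · exact h9T h
    · exact Finset.mem_insert_of_mem h5
    · intro hc
      rcases Finset.mem_insert.1 hc with h | h
      · omega
      · exact h3 h
  · -- left inverse
    intro S hS
    rw [Finset.mem_filter, mem_FibHat_iff (by omega)] at hS
    obtain ⟨⟨hsub, hfib, hrun⟩, h9, h5, h3⟩ := hS
    have h7S : 2 * m + 7 ∈ S := by
      rcases hfib (m + 3) (Finset.mem_Icc.2 (by omega)) with h | h
      · have e : 2 * (m + 3) + 1 = 2 * m + 7 := by omega
        rwa [e] at h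
      · have e : 2 * (m + 3) + 3 = 2 * m + 9 := by omega
        rw [e] at h; exact absurd h h9
    exact Finset.insert_erase h7S
  · -- right inverse
    intro T hT
    rw [Finset.mem_filter, mem_FibHat_iff (by omega)] at hT
    apply Finset.erase_insert
    intro h
    have := mem_Aset'.1 (hT.1.1 h); omega
  · -- weights
    intro S hS
    rw [Finset.mem_filter, mem_FibHat_iff (by omega)] at hS
    obtain ⟨⟨hsub, hfib, hrun⟩, h9, h5, h3⟩ := hS
    have h7S : 2 * m + 7 ∈ S := by
      rcases hfib (m + 3) (Finset.mem_Icc.2 (by omega)) with h | h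
      · have e : 2 * (m + 3) + 1 = 2 * m + 7 := by omega
        rwa [e] at h
      · have e : 2 * (m + 3) + 3 = 2 * m + 9 := by omega
        rw [e] at h; exact absurd h h9
    set T := S.erase (2 * m + 7) with hT
    have hmemT : ∀ x, x ∈ T ↔ x ∈ S ∧ x ≠ 2 * m + 7 := by
      intro x; rw [hT, Finset.mem_erase]; tauto
    have hTsub : T ⊆ Aset' (m + 3) := by
      intro y hy
      obtain ⟨hyS, hy7⟩ := (hmemT y).1 hy
      have hb := mem_Aset'.1 (hsub hyS)
      have h9' : y ≠ 2 * m + 9 := fun h => h9 (h ▸ hyS)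
      exact mem_Aset'.2 ⟨hb.1, hb.2.1, by omega⟩
    have h5T : 2 * m + 5 ∈ T := (hmemT _).2 ⟨h5, by omega⟩
    have h3T : 2 * m + 3 ∉ T := fun h => h3 ((hmemT _).1 h).1
    have h7T : 2 * m + 7 ∉ T := fun h => ((hmemT _).1 h).2 rfl
    have hins : insert (2 * m + 7) T = S := Finset.insert_erase h7S
    have htop : ∀ y ∈ T, y < 2 * m + 7 := by
      intro y hy; have := mem_Aset'.1 (hTsub hy); omega
    have hcard : S.card = T.card + 1 := by
      rw [← hins, Finset.card_insert_of_notMem h7T]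
    have hPP : (PP S).card = (PP T).card := by
      have hc := card_PP_insert (S := T) (x := 2 * m + 7) (by omega) htop
      rw [hins] at hc
      have e : 2 * m + 7 - 4 = 2 * m + 3 := by omega
      rw [e, if_neg h3T] at hc
      omega
    have hfS := cExp_formula (by omega) hsub
    have hfT := cExp_formula (by omega) hTsub
    have e1 : 2 * (m + 5) - 1 = 2 * m + 9 := by omega
    have e2 : 2 * (m + 3) - 1 = 2 * m + 5 := by omega
    rw [e1, if_neg h9] at hfS
    rw [e2, if_pos h5T] at hfT
    have h3iff : (3 ∈ S) ↔ (3 ∈ T) := by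
      rw [hmemT]; constructor
      · intro h; exact ⟨h, by omega⟩
      · tauto
    congr 1
    by_cases h3' : 3 ∈ T
    · rw [if_pos (h3iff.2 h3')] at hfS
      rw [if_pos h3'] at hfT
      omega
    · rw [if_neg (fun hc => h3' (h3iff.1 hc))] at hfS
      rw [if_neg h3'] at hfT
      omega

end GBC

namespace GBC

open Finset Polynomial

lemma bij1 (m : ℕ) :
    ∑ S ∈ (FibHat (m + 5)).filter (fun S => 2 * m + 7 ∈ S ∧ 2 * m + 9 ∈ S),
        (X : Polynomial ℤ) ^ cExp (m + 5) S
      = ∑ T ∈ (FibHat (m + 3)).filter (fun T => ¬(2 * m + 3 ∉ T ∧ 2 * m + 5 ∈ T)),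
          (X : Polynomial ℤ) ^ (cExp (m + 3) T + 2) := by
  apply Finset.sum_nbij' (i := fun S => (S.erase (2 * m + 9)).erase (2 * m + 7))
    (j := fun T => insert (2 * m + 9) (insert (2 * m + 7) T))
  · -- hi
    intro S hS
    rw [Finset.mem_filter, mem_FibHat_iff (by omega)] at hS
    obtain ⟨⟨hsub, hfib, hrun⟩, h7, h9⟩ := hS
    set T := (S.erase (2 * m + 9)).erase (2 * m + 7) with hT
    have hmemT : ∀ x, x ∈ T ↔ x ∈ S ∧ x ≠ 2 * m + 7 ∧ x ≠ 2 * m + 9 := by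
      intro x; rw [hT, Finset.mem_erase, Finset.mem_erase]; tauto
    have hTsub : T ⊆ Aset' (m + 3) := by
      intro y hy
      obtain ⟨hyS, hy7, hy9⟩ := (hmemT y).1 hy
      have hb := mem_Aset'.1 (hsub hyS)
      exact mem_Aset'.2 ⟨hb.1, hb.2.1, by omega⟩
    have h3of5 : 2 * m + 5 ∈ S → 2 * m + 3 ∈ S := by
      intro h5
      by_contra h3
      have hrr : Run S (2 * m + 5) 3 := by
        refine ⟨by omega, ?_, ?_, ?_⟩
        · intro i hi
          rcases (by omega : i = 0 ∨ i = 1 ∨ i = 2) with rfl | rfl | rfl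
          · have e : 2 * m + 5 + 2 * 0 = 2 * m + 5 := by omega
            rw [e]; exact h5
          · have e : 2 * m + 5 + 2 * 1 = 2 * m + 7 := by omega
            rw [e]; exact h7
          · have e : 2 * m + 5 + 2 * 2 = 2 * m + 9 := by omega
            rw [e]; exact h9
        · have e : 2 * m + 5 - 2 = 2 * m + 3 := by omega
          rw [e]; exact h3
        · intro hc
          have := mem_Aset'.1 (hsub hc); omega
      rcases hrun _ _ hrr with h | h
      · omega
      · rcases h with ⟨r, hr⟩; omega
    rw [Finset.mem_filter, mem_FibHat_iff (by omega)]
    refine ⟨⟨hTsub, ?_, ?_⟩, ?_⟩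
    · intro j hj
      rw [Finset.mem_Icc] at hj
      rcases hfib j (Finset.mem_Icc.2 (by omega)) with h | h
      · exact Or.inl ((hmemT _).2 ⟨h, by omega, by omega⟩)
      · exact Or.inr ((hmemT _).2 ⟨h, by omega, by omega⟩)
    · -- NoOdd T
      by_cases h5 : 2 * m + 5 ∈ S
      · have hpart : ∀ y ∈ S, y ≤ 2 * m + 5 ∨ y = 2 * m + 5 + 2 ∨ y = 2 * m + 5 + 4 := by
          intro y hy
          have := mem_Aset'.1 (hsub hy); omega
        have h2' : 2 * m + 5 + 2 ∈ S := by
          have e : 2 * m + 5 + 2 = 2 * m + 7 := by omega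
          rw [e]; exact h7
        have h4' : 2 * m + 5 + 4 ∈ S := by
          have e : 2 * m + 5 + 4 = 2 * m + 9 := by omega
          rw [e]; exact h9
        have := noOdd_truncate h2' h4' hpart hrun
        have e1 : 2 * m + 5 + 2 = 2 * m + 7 := by omega
        have e2 : 2 * m + 5 + 4 = 2 * m + 9 := by omega
        rw [e1, e2] at this
        exact this
      · -- gap: S = insert (2m+7) (insert (2m+9) T)
        have hgap : ∀ y ∈ T, y + 4 ≤ 2 * m + 7 := by
          intro y hy
          obtain ⟨hyS, hy7, hy9⟩ := (hmemT y).1 hy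
          have hb := mem_Aset'.1 (hsub hyS)
          have h5' : y ≠ 2 * m + 5 := fun h => h5 (h ▸ hyS)
          omega
        have h7e : 2 * m + 7 ∈ S.erase (2 * m + 9) := Finset.mem_erase.2 ⟨by omega, h7⟩
        have hins : insert (2 * m + 7) (insert (2 * m + 7 + 2) T) = S := by
          have e : 2 * m + 7 + 2 = 2 * m + 9 := by omega
          rw [e, Finset.insert_comm, hT, Finset.insert_erase h7e, Finset.insert_erase h9]
        exact (noOdd_insert_pair_iff hgap).1 (hins ▸ hrun)
    · -- codomain filter
      rintro ⟨h3T, h5T⟩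
      have h5S : 2 * m + 5 ∈ S := ((hmemT _).1 h5T).1
      have h3S := h3of5 h5S
      exact h3T ((hmemT _).2 ⟨h3S, by omega, by omega⟩)
  · -- hj
    intro T hT
    rw [Finset.mem_filter, mem_FibHat_iff (by omega)] at hT
    obtain ⟨⟨hsub, hfib, hrun⟩, hfil⟩ := hT
    have hb : ∀ y ∈ T, y % 2 = 1 ∧ 3 ≤ y ∧ y < 2 * m + 6 := by
      intro y hy
      have := mem_Aset'.1 (hsub hy); exact ⟨this.1, this.2.1, by omega⟩
    have h9T : 2 * m + 9 ∉ T := fun h => by have := hb _ h; omega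
    have h7T : 2 * m + 7 ∉ T := fun h => by have := hb _ h; omega
    rw [Finset.mem_filter, mem_FibHat_iff (by omega)]
    refine ⟨⟨?_, ?_, ?_⟩, ?_, Finset.mem_insert_self _ _⟩
    · intro y hy
      rcases Finset.mem_insert.1 hy with rfl | hy
      · exact mem_Aset'.2 ⟨by omega, by omega, by omega⟩
      · rcases Finset.mem_insert.1 hy with rfl | hy
        · exact mem_Aset'.2 ⟨by omega, by omega, by omega⟩
        · have := hb y hy
          exact mem_Aset'.2 ⟨this.1, this.2.1, by omega⟩
    · intro j hj
      rw [Finset.mem_Icc] at hj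
      by_cases hjm : j ≤ m + 1
      · rcases hfib j (Finset.mem_Icc.2 (by omega)) with h | h
        · exact Or.inl (Finset.mem_insert_of_mem (Finset.mem_insert_of_mem h))
        · exact Or.inr (Finset.mem_insert_of_mem (Finset.mem_insert_of_mem h))
      · by_cases hjm2 : j = m + 2
        · right
          have e : 2 * j + 3 = 2 * m + 7 := by omega
          rw [e]; exact Finset.mem_insert_of_mem (Finset.mem_insert_self _ _)
        · right
          have e : 2 * j + 3 = 2 * m + 9 := by omega
          rw [e]; exact Finset.mem_insert_self _ _
    · -- NoOdd (insert (2m+9) (insert (2m+7) T))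
      by_cases h5 : 2 * m + 5 ∈ T
      · have h3T : 2 * m + 3 ∈ T := by
          by_contra h3
          exact hfil ⟨h3, h5⟩
        have hb2 : 2 * m + 5 - 2 ∈ T := by
          have e : 2 * m + 5 - 2 = 2 * m + 3 := by omega
          rw [e]; exact h3T
        have htop : ∀ y ∈ T, y ≤ 2 * m + 5 := fun y hy => by have := hb y hy; omega
        have := noOdd_extend h5 hb2 (by omega) htop hrun
        have e1 : 2 * m + 5 + 2 = 2 * m + 7 := by omega
        have e2 : 2 * m + 5 + 4 = 2 * m + 9 := by omega
        rw [e1, e2] at this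
        exact this
      · have hgap : ∀ y ∈ T, y + 4 ≤ 2 * m + 7 := by
          intro y hy
          have := hb y hy
          have h5' : y ≠ 2 * m + 5 := fun h => h5 (h ▸ hy)
          omega
        have := (noOdd_insert_pair_iff hgap).2 hrun
        have e : 2 * m + 7 + 2 = 2 * m + 9 := by omega
        rw [e, Finset.insert_comm] at this
        exact this
    · exact Finset.mem_insert_of_mem (Finset.mem_insert_self _ _)
  · -- left inverse
    intro S hS
    rw [Finset.mem_filter] at hS
    obtain ⟨-, h7, h9⟩ := hS
    have h7e : 2 * m + 7 ∈ S.erase (2 * m + 9) := Finset.mem_erase.2 ⟨by omega, h7⟩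
    rw [Finset.insert_erase h7e, Finset.insert_erase h9]
  · -- right inverse
    intro T hT
    rw [Finset.mem_filter, mem_FibHat_iff (by omega)] at hT
    have hb : ∀ y ∈ T, y < 2 * m + 6 := by
      intro y hy
      have := mem_Aset'.1 (hT.1.1 hy); omega
    have h9T : 2 * m + 9 ∉ insert (2 * m + 7) T := by
      intro hc
      rcases Finset.mem_insert.1 hc with h | h
      · omega
      · have := hb _ h; omega
    have h7T : 2 * m + 7 ∉ T := fun h => by have := hb _ h; omega
    rw [Finset.erase_insert h9T, Finset.erase_insert h7T]
  · -- weights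
    intro S hS
    rw [Finset.mem_filter, mem_FibHat_iff (by omega)] at hS
    obtain ⟨⟨hsub, hfib, hrun⟩, h7, h9⟩ := hS
    set T := (S.erase (2 * m + 9)).erase (2 * m + 7) with hT
    have hmemT : ∀ x, x ∈ T ↔ x ∈ S ∧ x ≠ 2 * m + 7 ∧ x ≠ 2 * m + 9 := by
      intro x; rw [hT, Finset.mem_erase, Finset.mem_erase]; tauto
    have hTsub : T ⊆ Aset' (m + 3) := by
      intro y hy
      obtain ⟨hyS, hy7, hy9⟩ := (hmemT y).1 hy
      have hb := mem_Aset'.1 (hsub hyS)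
      exact mem_Aset'.2 ⟨hb.1, hb.2.1, by omega⟩
    have h3of5 : 2 * m + 5 ∈ S → 2 * m + 3 ∈ S := by
      intro h5
      by_contra h3
      have hrr : Run S (2 * m + 5) 3 := by
        refine ⟨by omega, ?_, ?_, ?_⟩
        · intro i hi
          rcases (by omega : i = 0 ∨ i = 1 ∨ i = 2) with rfl | rfl | rfl
          · have e : 2 * m + 5 + 2 * 0 = 2 * m + 5 := by omega
            rw [e]; exact h5
          · have e : 2 * m + 5 + 2 * 1 = 2 * m + 7 := by omega
            rw [e]; exact h7
          · have e : 2 * m + 5 + 2 * 2 = 2 * m + 9 := by omega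
            rw [e]; exact h9
        · have e : 2 * m + 5 - 2 = 2 * m + 3 := by omega
          rw [e]; exact h3
        · intro hc
          have := mem_Aset'.1 (hsub hc); omega
      rcases hrun _ _ hrr with h | h
      · omega
      · rcases h with ⟨r, hr⟩; omega
    have h3S : 2 * m + 3 ∈ S ∨ 2 * m + 5 ∉ S := by
      by_cases h5 : 2 * m + 5 ∈ S
      · exact Or.inl (h3of5 h5)
      · exact Or.inr h5
    have h3T : 2 * m + 3 ∈ T ∨ 2 * m + 5 ∉ T := by
      rcases h3S with h | h
      · exact Or.inl ((hmemT _).2 ⟨h, by omega, by omega⟩)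
      · exact Or.inr (fun hc => h ((hmemT _).1 hc).1)
    -- and from Fib: 2m+3 ∈ S ∨ 2m+5 ∈ S so in fact 2m+3 ∈ T always
    have h3Talways : 2 * m + 3 ∈ T := by
      rcases h3T with h | h
      · exact h
      · rcases hfib (m + 1) (Finset.mem_Icc.2 (by omega)) with hx | hx
        · have e : 2 * (m + 1) + 1 = 2 * m + 3 := by omega
          rw [e] at hx
          exact (hmemT _).2 ⟨hx, by omega, by omega⟩
        · have e : 2 * (m + 1) + 3 = 2 * m + 5 := by omega
          rw [e] at hx
          exact absurd ((hmemT _).2 ⟨hx, by omega, by omega⟩) h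
    have h7T : 2 * m + 7 ∉ T := fun h => ((hmemT _).1 h).2.1 rfl
    have h9T' : 2 * m + 9 ∉ insert (2 * m + 7) T := by
      intro hc
      rcases Finset.mem_insert.1 hc with h | h
      · omega
      · exact ((hmemT _).1 h).2.2 rfl
    have h7e : 2 * m + 7 ∈ S.erase (2 * m + 9) := Finset.mem_erase.2 ⟨by omega, h7⟩
    have hins : insert (2 * m + 9) (insert (2 * m + 7) T) = S := by
      rw [hT, Finset.insert_erase h7e, Finset.insert_erase h9]
    have htopT : ∀ y ∈ T, y < 2 * m + 7 := by
      intro y hy; have := mem_Aset'.1 (hTsub hy); omega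
    have htopS1 : ∀ y ∈ insert (2 * m + 7) T, y < 2 * m + 9 := by
      intro y hy
      rcases Finset.mem_insert.1 hy with rfl | hy
      · omega
      · have := htopT y hy; omega
    have hcard : S.card = T.card + 2 := by
      rw [← hins, Finset.card_insert_of_notMem h9T', Finset.card_insert_of_notMem h7T]
    have h5iff : (2 * m + 5 ∈ insert (2 * m + 7) T) ↔ (2 * m + 5 ∈ T) := by
      constructor
      · intro h
        rcases Finset.mem_insert.1 h with h | h
        · omega
        · exact h
      · exact Finset.mem_insert_of_mem
    have hPP1 : (PP (insert (2 * m + 7) T)).card = (PP T).card + 1 := by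
      have hc := card_PP_insert (S := T) (x := 2 * m + 7) (by omega) htopT
      have e : 2 * m + 7 - 4 = 2 * m + 3 := by omega
      rw [e, if_pos h3Talways] at hc
      exact hc
    have hPP : (PP S).card = (PP T).card + 1 + (if 2 * m + 5 ∈ T then 1 else 0) := by
      have hc := card_PP_insert (S := insert (2 * m + 7) T) (x := 2 * m + 9) (by omega) htopS1
      rw [hins] at hc
      have e : 2 * m + 9 - 4 = 2 * m + 5 := by omega
      rw [e] at hc
      by_cases h5 : 2 * m + 5 ∈ T
      · rw [if_pos (h5iff.2 h5)] at hc
        rw [if_pos h5]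
        omega
      · rw [if_neg (fun hcc => h5 (h5iff.1 hcc))] at hc
        rw [if_neg h5]
        omega
    have hfS := cExp_formula (by omega) hsub
    have hfT := cExp_formula (by omega) hTsub
    have e1 : 2 * (m + 5) - 1 = 2 * m + 9 := by omega
    have e2 : 2 * (m + 3) - 1 = 2 * m + 5 := by omega
    rw [e1, if_pos h9] at hfS
    rw [e2] at hfT
    have h3iff : (3 ∈ S) ↔ (3 ∈ T) := by
      constructor
      · intro h; exact (hmemT _).2 ⟨h, by omega, by omega⟩
      · intro h; exact ((hmemT _).1 h).1
    congr 1
    by_cases h3 : 3 ∈ T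
    · rw [if_pos (h3iff.2 h3)] at hfS
      rw [if_pos h3] at hfT
      by_cases h5 : 2 * m + 5 ∈ T
      · rw [if_pos h5] at hfT hPP; omega
      · rw [if_neg h5] at hfT hPP; omega
    · rw [if_neg (fun hc => h3 (h3iff.1 hc))] at hfS
      rw [if_neg h3] at hfT
      by_cases h5 : 2 * m + 5 ∈ T
      · rw [if_pos h5] at hfT hPP; omega
      · rw [if_neg h5] at hfT hPP; omega

end GBC

namespace GBC

open Finset Polynomial

lemma bij4 (m : ℕ) :
    ∑ S ∈ (FibHat (m + 5)).filter (fun S => 2 * m + 9 ∉ S ∧ (2 * m + 5 ∈ S ∧ 2 * m + 3 ∈ S)),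
        (X : Polynomial ℤ) ^ cExp (m + 5) S
      = ∑ T ∈ (FibHat (m + 2)).filter (fun T => 2 * m + 1 ∈ T ∧ 2 * m + 3 ∈ T),
          (X : Polynomial ℤ) ^ (cExp (m + 2) T + 4) := by
  apply Finset.sum_nbij' (i := fun S => (S.erase (2 * m + 7)).erase (2 * m + 5))
    (j := fun T => insert (2 * m + 7) (insert (2 * m + 5) T))
  · -- hi
    intro S hS
    rw [Finset.mem_filter, mem_FibHat_iff (by omega)] at hS
    obtain ⟨⟨hsub, hfib, hrun⟩, h9, h5, h3⟩ := hS
    have h7S : 2 * m + 7 ∈ S := by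
      rcases hfib (m + 3) (Finset.mem_Icc.2 (by omega)) with h | h
      · have e : 2 * (m + 3) + 1 = 2 * m + 7 := by omega
        rwa [e] at h
      · have e : 2 * (m + 3) + 3 = 2 * m + 9 := by omega
        rw [e] at h; exact absurd h h9
    have h1S : 2 * m + 1 ∈ S := by
      by_contra h1
      have hrr : Run S (2 * m + 3) 3 := by
        refine ⟨by omega, ?_, ?_, ?_⟩
        · intro i hi
          rcases (by omega : i = 0 ∨ i = 1 ∨ i = 2) with rfl | rfl | rfl
          · have e : 2 * m + 3 + 2 * 0 = 2 * m + 3 := by omega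
            rw [e]; exact h3
          · have e : 2 * m + 3 + 2 * 1 = 2 * m + 5 := by omega
            rw [e]; exact h5
          · have e : 2 * m + 3 + 2 * 2 = 2 * m + 7 := by omega
            rw [e]; exact h7S
        · have e : 2 * m + 3 - 2 = 2 * m + 1 := by omega
          rw [e]; exact h1
        · have e : 2 * m + 3 + 2 * 3 = 2 * m + 9 := by omega
          rw [e]; exact h9
      rcases hrun _ _ hrr with h | h
      · omega
      · rcases h with ⟨r, hr⟩; omega
    set T := (S.erase (2 * m + 7)).erase (2 * m + 5) with hT
    have hmemT : ∀ x, x ∈ T ↔ x ∈ S ∧ x ≠ 2 * m + 5 ∧ x ≠ 2 * m + 7 := by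
      intro x; rw [hT, Finset.mem_erase, Finset.mem_erase]; tauto
    have hTsub : T ⊆ Aset' (m + 2) := by
      intro y hy
      obtain ⟨hyS, hy5, hy7⟩ := (hmemT y).1 hy
      have hb := mem_Aset'.1 (hsub hyS)
      have h9' : y ≠ 2 * m + 9 := fun h => h9 (h ▸ hyS)
      exact mem_Aset'.2 ⟨hb.1, hb.2.1, by omega⟩
    rw [Finset.mem_filter, mem_FibHat_iff (by omega)]
    refine ⟨⟨hTsub, ?_, ?_⟩, (hmemT _).2 ⟨h1S, by omega, by omega⟩,
      (hmemT _).2 ⟨h3, by omega, by omega⟩⟩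
    · intro j hj
      rw [Finset.mem_Icc] at hj
      rcases hfib j (Finset.mem_Icc.2 (by omega)) with h | h
      · exact Or.inl ((hmemT _).2 ⟨h, by omega, by omega⟩)
      · exact Or.inr ((hmemT _).2 ⟨h, by omega, by omega⟩)
    · -- NoOdd T via truncation at b = 2m+3
      have hpart : ∀ y ∈ S, y ≤ 2 * m + 3 ∨ y = 2 * m + 3 + 2 ∨ y = 2 * m + 3 + 4 := by
        intro y hy
        have := mem_Aset'.1 (hsub hy)
        have h9' : y ≠ 2 * m + 9 := fun h => h9 (h ▸ hy)
        omega
      have h2' : 2 * m + 3 + 2 ∈ S := by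
        have e : 2 * m + 3 + 2 = 2 * m + 5 := by omega
        rw [e]; exact h5
      have h4' : 2 * m + 3 + 4 ∈ S := by
        have e : 2 * m + 3 + 4 = 2 * m + 7 := by omega
        rw [e]; exact h7S
      have := noOdd_truncate h2' h4' hpart hrun
      have e1 : 2 * m + 3 + 2 = 2 * m + 5 := by omega
      have e2 : 2 * m + 3 + 4 = 2 * m + 7 := by omega
      rw [e1, e2] at this
      exact this
  · -- hj
    intro T hT
    rw [Finset.mem_filter, mem_FibHat_iff (by omega)] at hT
    obtain ⟨⟨hsub, hfib, hrun⟩, h1, h3⟩ := hT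
    have hb : ∀ y ∈ T, y % 2 = 1 ∧ 3 ≤ y ∧ y < 2 * m + 4 := by
      intro y hy
      have := mem_Aset'.1 (hsub hy); exact ⟨this.1, this.2.1, by omega⟩
    have hm1 : 1 ≤ m := by
      have := hb _ h1; omega
    have h5T : 2 * m + 5 ∉ T := fun h => by have := hb _ h; omega
    have h7T : 2 * m + 7 ∉ T := fun h => by have := hb _ h; omega
    rw [Finset.mem_filter, mem_FibHat_iff (by omega)]
    refine ⟨⟨?_, ?_, ?_⟩, ?_, ?_, ?_⟩
    · intro y hy
      rcases Finset.mem_insert.1 hy with rfl | hy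
      · exact mem_Aset'.2 ⟨by omega, by omega, by omega⟩
      · rcases Finset.mem_insert.1 hy with rfl | hy
        · exact mem_Aset'.2 ⟨by omega, by omega, by omega⟩
        · have := hb y hy
          exact mem_Aset'.2 ⟨this.1, this.2.1, by omega⟩
    · intro j hj
      rw [Finset.mem_Icc] at hj
      by_cases hjm : j ≤ m
      · rcases hfib j (Finset.mem_Icc.2 (by omega)) with h | h
        · exact Or.inl (Finset.mem_insert_of_mem (Finset.mem_insert_of_mem h))
        · exact Or.inr (Finset.mem_insert_of_mem (Finset.mem_insert_of_mem h))
      · by_cases hjm1 : j = m + 1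
        · left
          have e : 2 * j + 1 = 2 * m + 3 := by omega
          rw [e]; exact Finset.mem_insert_of_mem (Finset.mem_insert_of_mem h3)
        · by_cases hjm2 : j = m + 2
          · left
            have e : 2 * j + 1 = 2 * m + 5 := by omega
            rw [e]; exact Finset.mem_insert_of_mem (Finset.mem_insert_self _ _)
          · left
            have e : 2 * j + 1 = 2 * m + 7 := by omega
            rw [e]; exact Finset.mem_insert_self _ _
    · -- NoOdd via extension at b = 2m+3
      have hb2 : 2 * m + 3 - 2 ∈ T := by
        have e : 2 * m + 3 - 2 = 2 * m + 1 := by omega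
        rw [e]; exact h1
      have htop : ∀ y ∈ T, y ≤ 2 * m + 3 := fun y hy => by have := hb y hy; omega
      have := noOdd_extend h3 hb2 (by omega) htop hrun
      have e1 : 2 * m + 3 + 2 = 2 * m + 5 := by omega
      have e2 : 2 * m + 3 + 4 = 2 * m + 7 := by omega
      rw [e1, e2] at this
      exact this
    · intro hc
      rcases Finset.mem_insert.1 hc with h | hc
      · omega
      rcases Finset.mem_insert.1 hc with h | h
      · omega
      · have := hb _ h; omega
    · exact Finset.mem_insert_of_mem (Finset.mem_insert_self _ _)
    · exact Finset.mem_insert_of_mem (Finset.mem_insert_of_mem h3)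
  · -- left inverse
    intro S hS
    rw [Finset.mem_filter, mem_FibHat_iff (by omega)] at hS
    obtain ⟨⟨hsub, hfib, hrun⟩, h9, h5, h3⟩ := hS
    have h7S : 2 * m + 7 ∈ S := by
      rcases hfib (m + 3) (Finset.mem_Icc.2 (by omega)) with h | h
      · have e : 2 * (m + 3) + 1 = 2 * m + 7 := by omega
        rwa [e] at h
      · have e : 2 * (m + 3) + 3 = 2 * m + 9 := by omega
        rw [e] at h; exact absurd h h9
    have h5e : 2 * m + 5 ∈ S.erase (2 * m + 7) := Finset.mem_erase.2 ⟨by omega, h5⟩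
    rw [Finset.insert_erase h5e, Finset.insert_erase h7S]
  · -- right inverse
    intro T hT
    rw [Finset.mem_filter, mem_FibHat_iff (by omega)] at hT
    have hb : ∀ y ∈ T, y < 2 * m + 4 := by
      intro y hy
      have := mem_Aset'.1 (hT.1.1 hy); omega
    have h7T : 2 * m + 7 ∉ insert (2 * m + 5) T := by
      intro hc
      rcases Finset.mem_insert.1 hc with h | h
      · omega
      · have := hb _ h; omega
    have h5T : 2 * m + 5 ∉ T := fun h => by have := hb _ h; omega
    rw [Finset.erase_insert h7T, Finset.erase_insert h5T]
  · -- weights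
    intro S hS
    rw [Finset.mem_filter, mem_FibHat_iff (by omega)] at hS
    obtain ⟨⟨hsub, hfib, hrun⟩, h9, h5, h3⟩ := hS
    have h7S : 2 * m + 7 ∈ S := by
      rcases hfib (m + 3) (Finset.mem_Icc.2 (by omega)) with h | h
      · have e : 2 * (m + 3) + 1 = 2 * m + 7 := by omega
        rwa [e] at h
      · have e : 2 * (m + 3) + 3 = 2 * m + 9 := by omega
        rw [e] at h; exact absurd h h9
    have h1S : 2 * m + 1 ∈ S := by
      by_contra h1
      have hrr : Run S (2 * m + 3) 3 := by
        refine ⟨by omega, ?_, ?_, ?_⟩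
        · intro i hi
          rcases (by omega : i = 0 ∨ i = 1 ∨ i = 2) with rfl | rfl | rfl
          · have e : 2 * m + 3 + 2 * 0 = 2 * m + 3 := by omega
            rw [e]; exact h3
          · have e : 2 * m + 3 + 2 * 1 = 2 * m + 5 := by omega
            rw [e]; exact h5
          · have e : 2 * m + 3 + 2 * 2 = 2 * m + 7 := by omega
            rw [e]; exact h7S
        · have e : 2 * m + 3 - 2 = 2 * m + 1 := by omega
          rw [e]; exact h1
        · have e : 2 * m + 3 + 2 * 3 = 2 * m + 9 := by omega
          rw [e]; exact h9
      rcases hrun _ _ hrr with h | h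
      · omega
      · rcases h with ⟨r, hr⟩; omega
    have hm1 : 1 ≤ m := by
      have := mem_Aset'.1 (hsub h1S); omega
    set T := (S.erase (2 * m + 7)).erase (2 * m + 5) with hT
    have hmemT : ∀ x, x ∈ T ↔ x ∈ S ∧ x ≠ 2 * m + 5 ∧ x ≠ 2 * m + 7 := by
      intro x; rw [hT, Finset.mem_erase, Finset.mem_erase]; tauto
    have hTsub : T ⊆ Aset' (m + 2) := by
      intro y hy
      obtain ⟨hyS, hy5, hy7⟩ := (hmemT y).1 hy
      have hb := mem_Aset'.1 (hsub hyS)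
      have h9' : y ≠ 2 * m + 9 := fun h => h9 (h ▸ hyS)
      exact mem_Aset'.2 ⟨hb.1, hb.2.1, by omega⟩
    have h1T : 2 * m + 1 ∈ T := (hmemT _).2 ⟨h1S, by omega, by omega⟩
    have h3T : 2 * m + 3 ∈ T := (hmemT _).2 ⟨h3, by omega, by omega⟩
    have h5T : 2 * m + 5 ∉ T := fun h => ((hmemT _).1 h).2.1 rfl
    have h7T' : 2 * m + 7 ∉ insert (2 * m + 5) T := by
      intro hc
      rcases Finset.mem_insert.1 hc with h | h
      · omega
      · exact ((hmemT _).1 h).2.2 rfl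
    have h5e : 2 * m + 5 ∈ S.erase (2 * m + 7) := Finset.mem_erase.2 ⟨by omega, h5⟩
    have hins : insert (2 * m + 7) (insert (2 * m + 5) T) = S := by
      rw [hT, Finset.insert_erase h5e, Finset.insert_erase h7S]
    have htopT : ∀ y ∈ T, y < 2 * m + 5 := by
      intro y hy; have := mem_Aset'.1 (hTsub hy); omega
    have htopS1 : ∀ y ∈ insert (2 * m + 5) T, y < 2 * m + 7 := by
      intro y hy
      rcases Finset.mem_insert.1 hy with rfl | hy
      · omega
      · have := htopT y hy; omega
    have hcard : S.card = T.card + 2 := by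
      rw [← hins, Finset.card_insert_of_notMem h7T', Finset.card_insert_of_notMem h5T]
    have hPP1 : (PP (insert (2 * m + 5) T)).card = (PP T).card + 1 := by
      have hc := card_PP_insert (S := T) (x := 2 * m + 5) (by omega) htopT
      have e : 2 * m + 5 - 4 = 2 * m + 1 := by omega
      rw [e, if_pos h1T] at hc
      exact hc
    have hPP : (PP S).card = (PP T).card + 2 := by
      have hc := card_PP_insert (S := insert (2 * m + 5) T) (x := 2 * m + 7) (by omega) htopS1
      rw [hins] at hc
      have e : 2 * m + 7 - 4 = 2 * m + 3 := by omega
      rw [e, if_pos (Finset.mem_insert_of_mem h3T)] at hc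
      omega
    have hfS := cExp_formula (by omega) hsub
    have hfT := cExp_formula (by omega) hTsub
    have e1 : 2 * (m + 5) - 1 = 2 * m + 9 := by omega
    have e2 : 2 * (m + 2) - 1 = 2 * m + 3 := by omega
    rw [e1, if_neg h9] at hfS
    rw [e2, if_pos h3T] at hfT
    have h3iff : (3 ∈ S) ↔ (3 ∈ T) := by
      constructor
      · intro h; exact (hmemT _).2 ⟨h, by omega, by omega⟩
      · intro h; exact ((hmemT _).1 h).1
    congr 1
    by_cases h3' : 3 ∈ T
    · rw [if_pos (h3iff.2 h3')] at hfS
      rw [if_pos h3'] at hfT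
      omega
    · rw [if_neg (fun hc => h3' (h3iff.1 hc))] at hfS
      rw [if_neg h3'] at hfT
      omega

end GBC

namespace GBC

open Finset Polynomial

lemma pull_pow (s : Finset (Finset ℕ)) (c : Finset ℕ → ℕ) (k : ℕ) :
    ∑ T ∈ s, (X : Polynomial ℤ) ^ (c T + k) = X ^ k * ∑ T ∈ s, (X : Polynomial ℤ) ^ (c T) := by
  rw [Finset.mul_sum]
  exact Finset.sum_congr rfl fun T _ => by rw [pow_add, mul_comm]

lemma hb5eq (m : ℕ) : bPoly (m + 5) =
    ∑ S ∈ (FibHat (m + 5)).filter (fun S => 2 * m + 7 ∈ S ∧ 2 * m + 9 ∈ S),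
      (X : Polynomial ℤ) ^ cExp (m + 5) S := by
  rw [bPoly, if_neg (by omega : ¬ m + 5 ≤ 2)]
  have e1 : 2 * (m + 5) - 3 = 2 * m + 7 := by omega
  have e2 : 2 * (m + 5) - 1 = 2 * m + 9 := by omega
  simp only [e1, e2]

lemma hc5eq (m : ℕ) : cPoly (m + 5) =
    ∑ S ∈ (FibHat (m + 5)).filter (fun S => 2 * m + 7 ∉ S ∧ 2 * m + 9 ∈ S),
      (X : Polynomial ℤ) ^ cExp (m + 5) S := by
  rw [cPoly, if_neg (by omega : ¬ m + 5 ≤ 2)]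
  have e1 : 2 * (m + 5) - 3 = 2 * m + 7 := by omega
  have e2 : 2 * (m + 5) - 1 = 2 * m + 9 := by omega
  simp only [e1, e2]

lemma hb3eq (m : ℕ) : bPoly (m + 3) =
    ∑ T ∈ (FibHat (m + 3)).filter (fun T => 2 * m + 3 ∈ T ∧ 2 * m + 5 ∈ T),
      (X : Polynomial ℤ) ^ cExp (m + 3) T := by
  rw [bPoly, if_neg (by omega : ¬ m + 3 ≤ 2)]
  have e1 : 2 * (m + 3) - 3 = 2 * m + 3 := by omega
  have e2 : 2 * (m + 3) - 1 = 2 * m + 5 := by omega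
  simp only [e1, e2]

lemma hc3eq (m : ℕ) : cPoly (m + 3) =
    ∑ T ∈ (FibHat (m + 3)).filter (fun T => 2 * m + 3 ∉ T ∧ 2 * m + 5 ∈ T),
      (X : Polynomial ℤ) ^ cExp (m + 3) T := by
  rw [cPoly, if_neg (by omega : ¬ m + 3 ≤ 2)]
  have e1 : 2 * (m + 3) - 3 = 2 * m + 3 := by omega
  have e2 : 2 * (m + 3) - 1 = 2 * m + 5 := by omega
  simp only [e1, e2]

lemma hb2eq (m : ℕ) : bPoly (m + 2) =
    ∑ T ∈ (FibHat (m + 2)).filter (fun T => 2 * m + 1 ∈ T ∧ 2 * m + 3 ∈ T),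
      (X : Polynomial ℤ) ^ cExp (m + 2) T := by
  by_cases hm : m = 0
  · subst hm
    rw [bPoly, if_pos (by omega)]
    have hempty : (FibHat (0 + 2)).filter (fun T => 2 * 0 + 1 ∈ T ∧ 2 * 0 + 3 ∈ T) = ∅ := by
      apply Finset.filter_eq_empty_iff.2
      intro T hT hc
      rw [mem_FibHat_iff (by omega)] at hT
      have := mem_Aset'.1 (hT.1 hc.1)
      omega
    rw [hempty, Finset.sum_empty]
  · rw [bPoly, if_neg (by omega : ¬ m + 2 ≤ 2)]
    have e1 : 2 * (m + 2) - 3 = 2 * m + 1 := by omega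
    have e2 : 2 * (m + 2) - 1 = 2 * m + 3 := by omega
    simp only [e1, e2]

end GBC

open Polynomial in
/-- For every `n ≥ 5`: `g_n = 2y²g_{n−2} + y⁴b_{n−3} + y²(y²−1)c_{n−2}`,
`b_n = y²g_{n−2} − y²c_{n−2}`, and `c_n = y²b_{n−2} + y²c_{n−2}` in `ℤ[y]`. -/
theorem gbc_recurrences (n : ℕ) (hn : 5 ≤ n) :
    gPoly n = 2 * X ^ 2 * gPoly (n - 2) + X ^ 4 * bPoly (n - 3) +
        X ^ 2 * (X ^ 2 - 1) * cPoly (n - 2) ∧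
    bPoly n = X ^ 2 * gPoly (n - 2) - X ^ 2 * cPoly (n - 2) ∧
    cPoly n = X ^ 2 * bPoly (n - 2) + X ^ 2 * cPoly (n - 2) := by
  obtain ⟨m, rfl⟩ : ∃ m, n = m + 5 := ⟨n - 5, by omega⟩
  have en2 : m + 5 - 2 = m + 3 := by omega
  have en3 : m + 5 - 3 = m + 2 := by omega
  rw [en2, en3]
  have hg3 : gPoly (m + 3) = ∑ T ∈ FibHat (m + 3), (X : Polynomial ℤ) ^ cExp (m + 3) T := rfl
  have hQ := Finset.sum_filter_add_sum_filter_not (FibHat (m + 3))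
    (fun T => 2 * m + 3 ∉ T ∧ 2 * m + 5 ∈ T) (fun T => (X : Polynomial ℤ) ^ cExp (m + 3) T)
  have h5split := Finset.sum_filter_add_sum_filter_not (FibHat (m + 3))
    (fun T => 2 * m + 5 ∈ T) (fun T => (X : Polynomial ℤ) ^ cExp (m + 3) T)
  have h53 := Finset.sum_filter_add_sum_filter_not
    ((FibHat (m + 3)).filter (fun T => 2 * m + 5 ∈ T)) (fun T => 2 * m + 3 ∈ T)
    (fun T => (X : Polynomial ℤ) ^ cExp (m + 3) T)
  have e53a : ((FibHat (m + 3)).filter (fun T => 2 * m + 5 ∈ T)).filter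
      (fun T => 2 * m + 3 ∈ T) =
      (FibHat (m + 3)).filter (fun T => 2 * m + 3 ∈ T ∧ 2 * m + 5 ∈ T) := by
    ext x; simp only [Finset.mem_filter]; clear * -; tauto
  have e53b : ((FibHat (m + 3)).filter (fun T => 2 * m + 5 ∈ T)).filter
      (fun T => ¬(2 * m + 3 ∈ T)) =
      (FibHat (m + 3)).filter (fun T => 2 * m + 3 ∉ T ∧ 2 * m + 5 ∈ T) := by
    ext x; simp only [Finset.mem_filter]
    exact ⟨fun ⟨⟨a, b⟩, c⟩ => ⟨a, c, b⟩, fun ⟨a, c, b⟩ => ⟨⟨a, b⟩, c⟩⟩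
  rw [e53a, e53b] at h53
  have t9 := Finset.sum_filter_add_sum_filter_not (FibHat (m + 5))
    (fun S => 2 * m + 9 ∈ S) (fun S => (X : Polynomial ℤ) ^ cExp (m + 5) S)
  have t97 := Finset.sum_filter_add_sum_filter_not
    ((FibHat (m + 5)).filter (fun S => 2 * m + 9 ∈ S)) (fun S => 2 * m + 7 ∈ S)
    (fun S => (X : Polynomial ℤ) ^ cExp (m + 5) S)
  have e97a : ((FibHat (m + 5)).filter (fun S => 2 * m + 9 ∈ S)).filter
      (fun S => 2 * m + 7 ∈ S) =
      (FibHat (m + 5)).filter (fun S => 2 * m + 7 ∈ S ∧ 2 * m + 9 ∈ S) := by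
    ext x; simp only [Finset.mem_filter]; clear * -; tauto
  have e97b : ((FibHat (m + 5)).filter (fun S => 2 * m + 9 ∈ S)).filter
      (fun S => ¬(2 * m + 7 ∈ S)) =
      (FibHat (m + 5)).filter (fun S => 2 * m + 7 ∉ S ∧ 2 * m + 9 ∈ S) := by
    ext x; simp only [Finset.mem_filter]; clear * -; tauto
  rw [e97a, e97b] at t97
  have t95 := Finset.sum_filter_add_sum_filter_not
    ((FibHat (m + 5)).filter (fun S => ¬(2 * m + 9 ∈ S))) (fun S => 2 * m + 5 ∈ S)
    (fun S => (X : Polynomial ℤ) ^ cExp (m + 5) S)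
  have t953 := Finset.sum_filter_add_sum_filter_not
    (((FibHat (m + 5)).filter (fun S => ¬(2 * m + 9 ∈ S))).filter
      (fun S => 2 * m + 5 ∈ S)) (fun S => 2 * m + 3 ∈ S)
    (fun S => (X : Polynomial ℤ) ^ cExp (m + 5) S)
  have e95a : ((FibHat (m + 5)).filter (fun S => ¬(2 * m + 9 ∈ S))).filter
      (fun S => ¬(2 * m + 5 ∈ S)) =
      (FibHat (m + 5)).filter (fun S => 2 * m + 9 ∉ S ∧ 2 * m + 5 ∉ S) := by
    ext x; simp only [Finset.mem_filter]; clear * -; tauto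
  have e953a : (((FibHat (m + 5)).filter (fun S => ¬(2 * m + 9 ∈ S))).filter
      (fun S => 2 * m + 5 ∈ S)).filter (fun S => 2 * m + 3 ∈ S) =
      (FibHat (m + 5)).filter (fun S => 2 * m + 9 ∉ S ∧ (2 * m + 5 ∈ S ∧ 2 * m + 3 ∈ S)) := by
    ext x; simp only [Finset.mem_filter]; clear * -; tauto
  have e953b : (((FibHat (m + 5)).filter (fun S => ¬(2 * m + 9 ∈ S))).filter
      (fun S => 2 * m + 5 ∈ S)).filter (fun S => ¬(2 * m + 3 ∈ S)) =
      (FibHat (m + 5)).filter (fun S => 2 * m + 9 ∉ S ∧ (2 * m + 5 ∈ S ∧ 2 * m + 3 ∉ S)) := by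
    ext x; simp only [Finset.mem_filter]; clear * -; tauto
  rw [e95a] at t95
  rw [e953a, e953b] at t953
  have A1 := GBC.bij1 m
  have A2 := GBC.bij2 m
  have A3 := GBC.bij3 m
  have A4 := GBC.bij4 m
  have A5 := GBC.bij5 m
  rw [GBC.pull_pow] at A1 A2 A3 A4 A5
  have hb5 := GBC.hb5eq m
  have hc5 := GBC.hc5eq m
  have hb3 := GBC.hb3eq m
  have hc3 := GBC.hc3eq m
  have hb2 := GBC.hb2eq m
  have goalb : bPoly (m + 5) = X ^ 2 * gPoly (m + 3) - X ^ 2 * cPoly (m + 3) := by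
    rw [hb5, A1, hg3, hc3]
    linear_combination (X : Polynomial ℤ) ^ 2 * hQ
  have goalc : cPoly (m + 5) = X ^ 2 * bPoly (m + 3) + X ^ 2 * cPoly (m + 3) := by
    rw [hc5, A2, hb3, hc3]
    linear_combination (-(X : Polynomial ℤ) ^ 2) * h53
  have goalg : gPoly (m + 5) = 2 * X ^ 2 * gPoly (m + 3) + X ^ 4 * bPoly (m + 2) +
      X ^ 2 * (X ^ 2 - 1) * cPoly (m + 3) := by
    have hgtotal : gPoly (m + 5) =
      ∑ S ∈ FibHat (m + 5), (X : Polynomial ℤ) ^ cExp (m + 5) S := rfl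
    rw [hgtotal, hg3, hb2, hc3]
    linear_combination (-1 : Polynomial ℤ) * t9 - t97 - t95 - t953 + A1 + A2 + A3 + A4 + A5
      + (X : Polynomial ℤ) ^ 2 * hQ + X ^ 2 * h5split
  exact ⟨goalg, goalb, goalc⟩
end
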